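/- arXiv:2306.03958 — 4 statements merged into one kernel-verified Lean document; each statement's English description precedes it below -/
import Mathlib

section
/- Let α ∈ (0,1) and let Γ ⊂ ℝ² be a Jordan curve. Then Γ admits a loop parametrization φ : [0,1] → Γ that is α-Hölder with some constant C ≥ 0 if and only if Γ has finite (1/α)-content. -/
open Set Metric

/-- A loop parametrization of `Γ` on `[0, ℓ]`: a continuous surjection onto `Γ`
with equal endpoints, injective on `[0, ℓ)`. -/
def IsLoopParam (φ : ℝ → EuclideanSpace ℝ (Fin 2)) (ℓ : ℝ)
    (Γ : Set (EuclideanSpace ℝ (Fin 2))) : Prop :=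
  ContinuousOn φ (Set.Icc 0 ℓ) ∧ φ '' Set.Icc 0 ℓ = Γ ∧ φ 0 = φ ℓ ∧
    Set.InjOn φ (Set.Ico 0 ℓ)

/-- The set of all sums `Σ |ψ(t_{k+1}) - ψ(t_k)|^p` over finite increasing sequences
`0 ≤ t₁ < ⋯ < tₙ ≤ 1`; its supremum is the `p`-content of the curve parametrized by `ψ`. -/
def pContentSums (p : ℝ) (ψ : ℝ → EuclideanSpace ℝ (Fin 2)) : Set ℝ :=
  {S | ∃ (n : ℕ) (t : Fin (n + 1) → ℝ), StrictMono t ∧ (∀ i, t i ∈ Set.Icc (0:ℝ) 1) ∧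
    S = ∑ i : Fin n, dist (ψ (t i.succ)) (ψ (t i.castSucc)) ^ p}

/-!
Write `p = 1 / α ≥ 1`. An `α`-Hölder parametrization satisfies `|φ y - φ x| ^ p ≤ C ^ p (y - x)`,
and these bounds telescope along every partition, so the `p`-content is at most `C ^ p`.

Conversely, let `ψ` have finite `p`-content and let `w t` be the supremum of `Σ |Δψ| ^ p` over
partitions of `[0, t]`. It is superadditive, hence `|ψ b - ψ a| ^ p ≤ w b - w a`. It is also
continuous: lower semicontinuous as a supremum of continuous functions of the partition points,
and upper semicontinuous from the right since Minkowski's inequality gives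
`w r ≤ (w t ^ (1/p) + v ^ (1/p)) ^ p`, where `v`, the same supremum over `[t, r]`, tends to `0`
as `r ↓ t`. Reparametrizing `ψ` by the inverse of the increasing homeomorphism `t ↦ w t + t`
makes the increments of `w` at most linear in time, which is an `α`-Hölder bound.
-/

open Filter Topology

/-- Minkowski's inequality for `(A ^ p⁻¹, x, 0) + (0, y, B ^ p⁻¹)` in `ℓᵖ`. -/
lemma add_add_rpow_le_rpow_add {p A B x y : ℝ} (hp : 1 ≤ p) (hA : 0 ≤ A) (hB : 0 ≤ B)
    (hx : 0 ≤ x) (hy : 0 ≤ y) :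
    A + (x + y) ^ p + B ≤ ((A + x ^ p) ^ p⁻¹ + (y ^ p + B) ^ p⁻¹) ^ p := by
  have hp0 : p ≠ 0 := by positivity
  have h := Real.Lp_add_le_of_nonneg (s := Finset.univ) (f := ![A ^ p⁻¹, x, 0])
    (g := ![0, y, B ^ p⁻¹]) hp (by simp [Fin.forall_fin_succ, hx, hA, Real.rpow_nonneg])
    (by simp [Fin.forall_fin_succ, hy, hB, Real.rpow_nonneg])
  simp only [Fin.sum_univ_three, Matrix.cons_val_zero, Matrix.cons_val_one, Matrix.cons_val_two,
    Matrix.head_cons, Matrix.tail_cons, add_zero, zero_add, one_div,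
    Real.rpow_inv_rpow hA hp0, Real.rpow_inv_rpow hB hp0, Real.zero_rpow hp0] at h
  calc A + (x + y) ^ p + B = ((A + (x + y) ^ p + B) ^ p⁻¹) ^ p :=
        (Real.rpow_inv_rpow (by positivity) hp0).symm
    _ ≤ _ := by gcongr

lemma List.exists_append_eq_forall_le_forall_lt {α : Type*} [LinearOrder α] (m : α) :
    ∀ l : List α, l.Pairwise (· ≤ ·) →
      ∃ l₁ l₂, l = l₁ ++ l₂ ∧ (∀ x ∈ l₁, x ≤ m) ∧ ∀ x ∈ l₂, m < x
  | [], _ => ⟨[], [], rfl, by simp, by simp⟩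
  | a :: l, h => by
    by_cases ha : a ≤ m
    · obtain ⟨l₁, l₂, rfl, h₁, h₂⟩ := exists_append_eq_forall_le_forall_lt m l h.of_cons
      exact ⟨a :: l₁, l₂, rfl, by simpa [ha] using h₁, h₂⟩
    · refine ⟨[], a :: l, rfl, by simp, fun x hx => ?_⟩
      rcases List.mem_cons.1 hx with rfl | hx
      · exact not_le.1 ha
      · exact (not_le.1 ha).trans_le (List.rel_of_pairwise_cons h hx)

lemma mem_Icc_of_pairwise_cons {α : Type*} [Preorder α] {a s t : α} {l : List α}
    (hl : (a :: l).Pairwise (· ≤ ·)) (hmem : ∀ x ∈ a :: l, x ∈ Icc s t) :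
    ∀ x ∈ a :: l, x ∈ Icc a t := by
  intro x hx
  refine ⟨?_, (hmem x hx).2⟩
  rcases List.mem_cons.1 hx with rfl | hx
  exacts [le_rfl, List.rel_of_pairwise_cons hl hx]

/-- Reparametrize by the inverse of `t ↦ w t + t`, extended beyond `[0, 1]` with slope one so
that it becomes an order isomorphism of `ℝ`. -/
lemma exists_reparam_sub_le {w : ℝ → ℝ} (hc : ContinuousOn w (Icc 0 1))
    (hm : MonotoneOn w (Icc 0 1)) :
    ∃ σ : ℝ → ℝ, Continuous σ ∧ StrictMono σ ∧ σ 0 = 0 ∧ σ 1 = 1 ∧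
      ∀ x y, 0 ≤ x → x ≤ y → y ≤ 1 → w (σ y) - w (σ x) ≤ (w 1 - w 0 + 1) * (y - x) := by
  set c : ℝ → ℝ := fun t => max 0 (min 1 t)
  have hcI : ∀ t, c t ∈ Icc 0 1 := fun t => ⟨le_max_left _ _, max_le zero_le_one (min_le_left _ _)⟩
  have hcid : ∀ t ∈ Icc (0 : ℝ) 1, c t = t := fun t ht => by simp [c, ht.1, ht.2]
  have hcmono : Monotone c := fun a b hab => max_le_max le_rfl (min_le_min le_rfl hab)
  set W : ℝ → ℝ := fun t => w (c t) + t
  have hWmono : StrictMono W :=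
    Monotone.add_strictMono (fun a b hab => hm (hcI a) (hcI b) (hcmono hab)) strictMono_id
  have hWcont : Continuous W :=
    (hc.comp_continuous (by fun_prop) hcI).add continuous_id
  have hWsurj : Function.Surjective W := by
    refine hWcont.surjective (tendsto_atTop_mono (fun t => ?_)
      (tendsto_atTop_add_const_left _ (w 0) tendsto_id)) (tendsto_atBot_mono (fun t => ?_)
      (tendsto_atBot_add_const_left _ (w 1) tendsto_id))
    · simpa [W] using hm ⟨le_rfl, zero_le_one⟩ (hcI t) (hcI t).1
    · simpa [W] using hm (hcI t) ⟨zero_le_one, le_rfl⟩ (hcI t).2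
  set e := StrictMono.orderIsoOfSurjective W hWmono hWsurj
  set K := w 1 - w 0 + 1
  have hK : 0 < K := by linarith [hm ⟨le_rfl, zero_le_one⟩ ⟨zero_le_one, le_rfl⟩ zero_le_one]
  have hW0 : W 0 = w 0 + K * 0 := by simp [W, hcid 0 ⟨le_rfl, zero_le_one⟩]
  have hW1 : W 1 = w 0 + K * 1 := by simp only [W, K, hcid 1 ⟨zero_le_one, le_rfl⟩]; ring
  set σ : ℝ → ℝ := fun u => e.symm (w 0 + K * u)
  have hσmono : StrictMono σ := e.symm.strictMono.comp fun a b hab => by gcongr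
  have hσ0 : σ 0 = 0 := by simp only [σ, ← hW0, e, StrictMono.orderIsoOfSurjective_symm_apply_self]
  have hσ1 : σ 1 = 1 := by simp only [σ, ← hW1, e, StrictMono.orderIsoOfSurjective_symm_apply_self]
  have hWσ : ∀ u ∈ Icc (0 : ℝ) 1, w (σ u) + σ u = w 0 + K * u := fun u hu => by
    have hσu : σ u ∈ Icc 0 1 := ⟨hσ0 ▸ hσmono.monotone hu.1, hσ1 ▸ hσmono.monotone hu.2⟩
    rw [← StrictMono.orderIsoOfSurjective_self_symm_apply W hWmono hWsurj (w 0 + K * u)]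
    change _ = w (c (σ u)) + σ u
    rw [hcid _ hσu]
  refine ⟨σ, e.symm.continuous.comp (by fun_prop), hσmono, hσ0, hσ1, fun x y hx hxy hy => ?_⟩
  have := hWσ x ⟨hx, hxy.trans hy⟩
  have := hWσ y ⟨hx.trans hxy, hy⟩
  nlinarith [hσmono.monotone hxy]

section PVariation

variable {E : Type*} [PseudoMetricSpace E] {p : ℝ} {f : ℝ → E}

noncomputable def pVarSum (p : ℝ) (f : ℝ → E) : List ℝ → ℝ
  | a :: b :: l => dist (f b) (f a) ^ p + pVarSum p f (b :: l)
  | _ => 0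

@[simp] lemma pVarSum_nil : pVarSum p f [] = 0 := rfl

@[simp] lemma pVarSum_singleton (a : ℝ) : pVarSum p f [a] = 0 := rfl

lemma pVarSum_cons_cons (a b : ℝ) (l : List ℝ) :
    pVarSum p f (a :: b :: l) = dist (f b) (f a) ^ p + pVarSum p f (b :: l) := rfl

lemma pVarSum_nonneg : ∀ l : List ℝ, 0 ≤ pVarSum p f l
  | [] | [_] => le_rfl
  | _ :: b :: l => add_nonneg (Real.rpow_nonneg dist_nonneg p) (pVarSum_nonneg (b :: l))

lemma pVarSum_le_cons (c : ℝ) : ∀ l : List ℝ, pVarSum p f l ≤ pVarSum p f (c :: l)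
  | [] => le_rfl
  | _ :: _ => le_add_of_nonneg_left (Real.rpow_nonneg dist_nonneg p)

lemma pVarSum_append_cons (m : ℝ) (l₂ : List ℝ) : ∀ l₁ : List ℝ,
    pVarSum p f (l₁ ++ m :: l₂) = pVarSum p f (l₁ ++ [m]) + pVarSum p f (m :: l₂)
  | [] => by simp
  | [a] => by simp [pVarSum_cons_cons]
  | a :: b :: l₁ => by
    simp only [List.cons_append, pVarSum_cons_cons]
    rw [← List.cons_append, pVarSum_append_cons m l₂ (b :: l₁)]
    simp only [List.cons_append, add_assoc]

lemma pVarSum_add_le_append : ∀ l₁ l₂ : List ℝ,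
    pVarSum p f l₁ + pVarSum p f l₂ ≤ pVarSum p f (l₁ ++ l₂)
  | [], l₂ => by simp
  | [a], l₂ => by simpa using pVarSum_le_cons a l₂
  | a :: b :: l₁, l₂ => by
    simpa [pVarSum_cons_cons, add_assoc] using pVarSum_add_le_append (b :: l₁) l₂

lemma exists_pairwise_lt_pVarSum_eq (hp : p ≠ 0) : ∀ (a : ℝ) (l : List ℝ),
    (a :: l).Pairwise (· ≤ ·) → ∃ l' ⊆ l, (a :: l').Pairwise (· < ·) ∧
      pVarSum p f (a :: l') = pVarSum p f (a :: l)
  | a, [], _ => ⟨[], by simp⟩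
  | a, b :: l, h => by
    obtain ⟨l', hl', hsort, hsum⟩ := exists_pairwise_lt_pVarSum_eq hp b l h.of_cons
    rcases (List.rel_of_pairwise_cons h (List.mem_cons_self)).eq_or_lt with rfl | hab
    · refine ⟨l', List.subset_cons_of_subset _ hl', hsort, ?_⟩
      rw [hsum, pVarSum_cons_cons, dist_self, Real.zero_rpow hp, zero_add]
    · refine ⟨b :: l', List.cons_subset_cons b hl', ?_, by rw [pVarSum_cons_cons, hsum]; rfl⟩
      refine List.pairwise_cons.2 ⟨fun x hx => hab.trans_le ?_, hsort⟩
      rcases List.mem_cons.1 hx with rfl | hx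
      · exact le_rfl
      · exact (List.rel_of_pairwise_cons hsort hx).le

lemma pVarSum_append_le_rpow_add (hp : 1 ≤ p) (m : ℝ) (l₁ l₂ : List ℝ) :
    pVarSum p f (l₁ ++ l₂) ≤
      (pVarSum p f (l₁ ++ [m]) ^ p⁻¹ + pVarSum p f (m :: l₂) ^ p⁻¹) ^ p := by
  have hp0 : p ≠ 0 := by positivity
  rcases List.eq_nil_or_concat' l₁ with rfl | ⟨L, a, rfl⟩
  · rw [List.nil_append, List.nil_append, pVarSum_singleton,
      Real.zero_rpow (inv_ne_zero hp0), zero_add, Real.rpow_inv_rpow (pVarSum_nonneg _) hp0]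
    exact pVarSum_le_cons m l₂
  rcases l₂ with _ | ⟨c, B⟩
  · rw [pVarSum_singleton, Real.zero_rpow (inv_ne_zero hp0), add_zero,
      Real.rpow_inv_rpow (pVarSum_nonneg _) hp0, List.append_nil]
    simpa using pVarSum_add_le_append (p := p) (f := f) (L ++ [a]) [m]
  have hleft : pVarSum p f (L ++ [a] ++ [m]) = pVarSum p f (L ++ [a]) + dist (f m) (f a) ^ p := by
    rw [List.append_assoc, List.singleton_append, pVarSum_append_cons, pVarSum_cons_cons,
      pVarSum_singleton, add_zero]
  rw [hleft, List.append_assoc, List.singleton_append, pVarSum_append_cons, pVarSum_cons_cons,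
    pVarSum_cons_cons, ← add_assoc]
  calc _ ≤ pVarSum p f (L ++ [a]) + (dist (f m) (f a) + dist (f c) (f m)) ^ p
        + pVarSum p f (c :: B) := by
        gcongr
        exact (dist_triangle _ _ _).trans_eq (by rw [add_comm, dist_comm (f m)])
    _ ≤ _ := add_add_rpow_le_rpow_add hp (pVarSum_nonneg _) (pVarSum_nonneg _)
        dist_nonneg dist_nonneg

lemma pVarSum_le_of_dist_rpow_le {K s t : ℝ} (hK0 : 0 ≤ K) (hst : s ≤ t)
    (hK : ∀ x ∈ Icc s t, ∀ y ∈ Icc s t, x ≤ y → dist (f y) (f x) ^ p ≤ K * (y - x))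
    {l : List ℝ} (hl : l.Pairwise (· ≤ ·)) (hmem : ∀ x ∈ l, x ∈ Icc s t) :
    pVarSum p f l ≤ K * (t - s) := by
  induction l generalizing s with
  | nil => simpa using mul_nonneg hK0 (sub_nonneg.2 hst)
  | cons a l ih =>
    rcases l with _ | ⟨b, l⟩
    · simpa using mul_nonneg hK0 (sub_nonneg.2 hst)
    have ha := hmem a (by simp)
    have hb := hmem b (by simp)
    have hab : a ≤ b := List.rel_of_pairwise_cons hl (by simp)
    have hsub : Icc b t ⊆ Icc s t := Icc_subset_Icc (ha.1.trans hab) le_rfl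
    have htail := ih hb.2 (fun x hx y hy => hK x (hsub hx) y (hsub hy)) hl.of_cons
      (mem_Icc_of_pairwise_cons hl.of_cons fun x hx => hmem x (List.mem_cons_of_mem a hx))
    rw [pVarSum_cons_cons]
    nlinarith [hK a ha b hb hab, ha.1]

lemma pVarSum_ofFn : ∀ {n : ℕ} (t : Fin (n + 1) → ℝ),
      pVarSum p f (List.ofFn t) = ∑ i : Fin n, dist (f (t i.succ)) (f (t i.castSucc)) ^ p
  | 0, t => by simp
  | n + 1, t => by
    have htail : List.ofFn (fun i : Fin (n + 1) => t i.succ) =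
        t (Fin.succ 0) :: List.ofFn (fun i : Fin n => t i.succ.succ) := List.ofFn_succ
    rw [List.ofFn_succ, htail, pVarSum_cons_cons, ← htail, pVarSum_ofFn (fun i => t i.succ),
      Fin.sum_univ_succ]
    rfl

def pVarSet (p : ℝ) (f : ℝ → E) (s t : ℝ) : Set ℝ :=
  pVarSum p f '' {l | l.Pairwise (· < ·) ∧ ∀ x ∈ l, x ∈ Icc s t}

/-- The `p`-th power of the `p`-variation of `f` on `[s, t]` (junk value `0` when unbounded). -/
noncomputable def pVar (p : ℝ) (f : ℝ → E) (s t : ℝ) : ℝ :=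
  sSup (pVarSet p f s t)

lemma zero_mem_pVarSet (s t : ℝ) : (0 : ℝ) ∈ pVarSet p f s t := ⟨[], by simp, rfl⟩

lemma pVarSet_mono {s t s' t' : ℝ} (h : Icc s t ⊆ Icc s' t') :
    pVarSet p f s t ⊆ pVarSet p f s' t' :=
  image_mono fun _ ⟨hl, hmem⟩ => ⟨hl, fun x hx => h (hmem x hx)⟩

lemma pVar_nonneg (s t : ℝ) : 0 ≤ pVar p f s t :=
  Real.sSup_nonneg <| by rintro _ ⟨l, -, rfl⟩; exact pVarSum_nonneg l

lemma pVar_mono {s t s' t' : ℝ} (hb : BddAbove (pVarSet p f s' t')) (h : Icc s t ⊆ Icc s' t') :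
    pVar p f s t ≤ pVar p f s' t' :=
  csSup_le_csSup hb ⟨0, zero_mem_pVarSet s t⟩ (pVarSet_mono h)

lemma le_pVar_of_pairwise_le {s t : ℝ} (hb : BddAbove (pVarSet p f s t)) (hp : p ≠ 0)
    {l : List ℝ} (hl : l.Pairwise (· ≤ ·)) (hmem : ∀ x ∈ l, x ∈ Icc s t) :
    pVarSum p f l ≤ pVar p f s t := by
  rcases l with _ | ⟨a, l⟩
  · exact pVar_nonneg s t
  obtain ⟨l', hl', hsort, hsum⟩ := exists_pairwise_lt_pVarSum_eq (f := f) hp a l hl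
  rw [← hsum]
  exact le_csSup hb ⟨a :: l', ⟨hsort, fun x hx => hmem x (List.cons_subset_cons a hl' hx)⟩, rfl⟩

lemma dist_rpow_le_pVar {s t a b : ℝ} (hb : BddAbove (pVarSet p f s t)) (hp : p ≠ 0)
    (ha : a ∈ Icc s t) (hb' : b ∈ Icc s t) (hab : a ≤ b) :
    dist (f b) (f a) ^ p ≤ pVar p f s t := by
  simpa [pVarSum_cons_cons] using
    le_pVar_of_pairwise_le hb hp (l := [a, b]) (by simpa using hab)
      (by simp only [List.mem_cons, List.not_mem_nil, or_false]
          rintro x (rfl | rfl) <;> assumption)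

lemma pVar_add_pVar_le {s m u : ℝ} (hb : BddAbove (pVarSet p f s u)) (hp : p ≠ 0)
    (hsm : s ≤ m) (hmu : m ≤ u) :
    pVar p f s m + pVar p f m u ≤ pVar p f s u := by
  have h₁ : Icc s m ⊆ Icc s u := Icc_subset_Icc le_rfl hmu
  have h₂ : Icc m u ⊆ Icc s u := Icc_subset_Icc hsm le_rfl
  rw [pVar, pVar, ← csSup_add ⟨0, zero_mem_pVarSet s m⟩ (hb.mono (pVarSet_mono h₁))
    ⟨0, zero_mem_pVarSet m u⟩ (hb.mono (pVarSet_mono h₂))]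
  refine csSup_le ⟨0, 0, zero_mem_pVarSet s m, 0, zero_mem_pVarSet m u, add_zero 0⟩ ?_
  rintro _ ⟨_, ⟨l₁, ⟨hl₁, hmem₁⟩, rfl⟩, _, ⟨l₂, ⟨hl₂, hmem₂⟩, rfl⟩, rfl⟩
  refine (pVarSum_add_le_append l₁ l₂).trans (le_pVar_of_pairwise_le hb hp ?_ ?_)
  · refine List.pairwise_append.2 ⟨hl₁.imp le_of_lt, hl₂.imp le_of_lt, fun x hx y hy => ?_⟩
    exact (hmem₁ x hx).2.trans (hmem₂ y hy).1
  · simp only [List.mem_append]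
    rintro x (hx | hx)
    exacts [h₁ (hmem₁ x hx), h₂ (hmem₂ x hx)]

lemma pVar_add_dist_rpow_le {s a b : ℝ} (hb : BddAbove (pVarSet p f s b)) (hp : p ≠ 0)
    (hsa : s ≤ a) (hab : a ≤ b) :
    pVar p f s a + dist (f b) (f a) ^ p ≤ pVar p f s b := by
  have := dist_rpow_le_pVar (hb.mono (pVarSet_mono (Icc_subset_Icc hsa le_rfl))) hp
    ⟨le_rfl, hab⟩ ⟨hab, le_rfl⟩ hab
  linarith [pVar_add_pVar_le hb hp hsa hab]

lemma pVar_le_rpow_add {s m u : ℝ} (hb : BddAbove (pVarSet p f s u)) (hp : 1 ≤ p)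
    (hsm : s ≤ m) (hmu : m ≤ u) :
    pVar p f s u ≤ (pVar p f s m ^ p⁻¹ + pVar p f m u ^ p⁻¹) ^ p := by
  have hp0 : p ≠ 0 := by positivity
  refine csSup_le ⟨0, zero_mem_pVarSet s u⟩ ?_
  rintro _ ⟨l, ⟨hl, hmem⟩, rfl⟩
  obtain ⟨l₁, l₂, rfl, h₁, h₂⟩ := List.exists_append_eq_forall_le_forall_lt m _ (hl.imp le_of_lt)
  rw [List.pairwise_append] at hl
  have hmem₁ : ∀ x ∈ l₁, x ∈ Icc s m := fun x hx => ⟨(hmem x (by simp [hx])).1, h₁ x hx⟩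
  have hmem₂ : ∀ x ∈ l₂, x ∈ Icc m u := fun x hx => ⟨(h₂ x hx).le, (hmem x (by simp [hx])).2⟩
  have hle₁ : pVarSum p f (l₁ ++ [m]) ≤ pVar p f s m := by
    refine le_pVar_of_pairwise_le (hb.mono (pVarSet_mono (Icc_subset_Icc le_rfl hmu))) hp0 ?_ ?_
    · exact List.pairwise_append.2 ⟨hl.1.imp le_of_lt, by simp, by simpa using h₁⟩
    · simp only [List.mem_append, List.mem_singleton]
      rintro x (hx | rfl)
      exacts [hmem₁ x hx, ⟨hsm, le_rfl⟩]
  have hle₂ : pVarSum p f (m :: l₂) ≤ pVar p f m u := by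
    refine le_pVar_of_pairwise_le (hb.mono (pVarSet_mono (Icc_subset_Icc hsm le_rfl))) hp0 ?_ ?_
    · exact List.pairwise_cons.2 ⟨fun x hx => (h₂ x hx).le, hl.2.1.imp le_of_lt⟩
    · simp only [List.mem_cons]
      rintro x (rfl | hx)
      exacts [⟨le_rfl, hmu⟩, hmem₂ x hx]
  have h₁0 := pVarSum_nonneg (p := p) (f := f) (l₁ ++ [m])
  have h₂0 := pVarSum_nonneg (p := p) (f := f) (m :: l₂)
  refine (pVarSum_append_le_rpow_add hp m l₁ l₂).trans ?_
  gcongr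

/-- If `pVar f t u` stayed above `ε` for all `u > t`, cutting off the first (small) increment of a
partition of `[t, u]` would lose a fixed amount of `pVar f t u`. -/
lemma exists_pVar_le {t T ε : ℝ} (hb : BddAbove (pVarSet p f t T)) (hp : 0 < p)
    (hf : ContinuousWithinAt f (Icc t T) t) (htT : t < T) (hε : 0 < ε) :
    ∃ u ∈ Ioc t T, pVar p f t u ≤ ε := by
  by_contra! hbig
  have hinc : Tendsto (fun b => dist (f b) (f t) ^ p) (𝓝[≥] t) (𝓝 0) := by
    rw [← nhdsWithin_Icc_eq_nhdsGE htT, ← Real.zero_rpow hp.ne', ← dist_self (f t)]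
    exact (hf.tendsto.dist tendsto_const_nhds).rpow_const (Or.inr hp.le)
  obtain ⟨u', hu', hsmall⟩ := mem_nhdsGE_iff_exists_Icc_subset.1
    (hinc.eventually (gt_mem_nhds (half_pos hε)))
  set u := min u' T
  have hu : u ∈ Ioc t T := ⟨lt_min hu' htT, min_le_right _ _⟩
  have hbu : BddAbove (pVarSet p f t u) := hb.mono (pVarSet_mono (Icc_subset_Icc le_rfl hu.2))
  have htail : ∀ r ∈ Ioc t u, ∀ l : List ℝ, l.Pairwise (· < ·) → (∀ x ∈ l, x ∈ Icc r u) →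
      pVarSum p f l ≤ pVar p f t u - ε := by
    intro r hr l hl hmem
    have hlr : pVarSum p f l ≤ pVar p f r u :=
      le_csSup (hbu.mono (pVarSet_mono (Icc_subset_Icc hr.1.le le_rfl))) ⟨l, ⟨hl, hmem⟩, rfl⟩
    have := pVar_add_pVar_le hbu hp.ne' hr.1.le hr.2
    linarith [hbig r ⟨hr.1, hr.2.trans hu.2⟩]
  have key : pVar p f t u ≤ pVar p f t u - ε / 2 := by
    refine csSup_le ⟨0, zero_mem_pVarSet t u⟩ ?_
    rintro _ ⟨l, ⟨hl, hmem⟩, rfl⟩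
    match l, hl, hmem with
    | [], _, _ | [_], _, _ =>
      simp only [pVarSum_nil, pVarSum_singleton]
      linarith [hbig u hu]
    | a :: b :: l, hl, hmem =>
      have ha := hmem a (by simp)
      have hb := hmem b (by simp)
      have hab : a < b := List.rel_of_pairwise_cons hl (by simp)
      rcases ha.1.eq_or_lt with rfl | hta
      · have hrest := htail b ⟨hab, hb.2⟩ (b :: l) hl.of_cons
          (mem_Icc_of_pairwise_cons (hl.of_cons.imp le_of_lt) fun x hx => hmem x (by simp [hx]))
        rw [pVarSum_cons_cons]
        have hfirst : dist (f b) (f t) ^ p < ε / 2 := hsmall ⟨hab.le, hb.2.trans (min_le_left _ _)⟩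
        linarith
      · linarith [htail a ⟨hta, ha.2⟩ _ hl (mem_Icc_of_pairwise_cons (hl.imp le_of_lt) hmem)]
  linarith

lemma continuousOn_pVarSum_map_min {s T : ℝ} (hf : ContinuousOn f (Icc s T)) (hp : 0 ≤ p) :
    ∀ l : List ℝ, (∀ x ∈ l, x ∈ Icc s T) →
      ContinuousOn (fun r => pVarSum p f (l.map (min r))) (Icc s T)
  | [], _ | [_], _ => continuousOn_const
  | a :: b :: l, hmem => by
    have hcomp : ∀ x ∈ Icc s T, ContinuousOn (fun r => f (min r x)) (Icc s T) := fun x hx =>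
      hf.comp (continuous_id.min continuous_const).continuousOn
        fun r hr => ⟨le_min hr.1 hx.1, (min_le_left _ _).trans hr.2⟩
    simp only [List.map_cons, pVarSum_cons_cons]
    refine ((continuous_dist.comp_continuousOn ((hcomp b (hmem b (by simp))).prodMk
      (hcomp a (hmem a (by simp))))).rpow_const fun _ _ => Or.inr hp).add ?_
    simpa using continuousOn_pVarSum_map_min hf hp (b :: l) fun x hx => hmem x (by simp [hx])

/-- `pVar f s ·` is lower semicontinuous: a near-optimal partition of `[s, t]`, clamped at `r`,
depends continuously on `r`. -/
lemma eventually_lt_pVar {s t T a : ℝ} (hb : BddAbove (pVarSet p f s T)) (hp : 0 < p)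
    (hf : ContinuousOn f (Icc s T)) (ht : t ∈ Icc s T) (ha : a < pVar p f s t) :
    ∀ᶠ r in 𝓝[Icc s T] t, a < pVar p f s r := by
  obtain ⟨_, ⟨l, ⟨hl, hmem⟩, rfl⟩, hal⟩ := exists_lt_of_lt_csSup ⟨0, zero_mem_pVarSet s t⟩ ha
  have hmemT : ∀ x ∈ l, x ∈ Icc s T := fun x hx => ⟨(hmem x hx).1, (hmem x hx).2.trans ht.2⟩
  have hclamp : pVarSum p f (l.map (min t)) = pVarSum p f l := by
    rw [List.map_congr_left fun x hx => min_eq_right (hmem x hx).2, List.map_id']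
  have hcont := continuousOn_pVarSum_map_min hf hp.le l hmemT t ht
  rw [ContinuousWithinAt, hclamp] at hcont
  filter_upwards [hcont.eventually (lt_mem_nhds hal), self_mem_nhdsWithin] with r hr hrT
  refine hr.trans_le (le_pVar_of_pairwise_le
    (hb.mono (pVarSet_mono (Icc_subset_Icc le_rfl hrT.2))) hp.ne' ?_ ?_)
  · exact List.pairwise_map.2 (hl.imp fun hxy => min_le_min_left r hxy.le)
  · simp only [List.mem_map]
    rintro _ ⟨x, hx, rfl⟩
    exact ⟨le_min hrT.1 (hmem x hx).1, min_le_left _ _⟩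

/-- Right of `t`, Minkowski bounds `pVar f s r` by `g (pVar f t r)`, where `g` is continuous with
`g 0 = pVar f s t`, and `pVar f t r → 0` as `r ↓ t`. -/
lemma eventually_pVar_lt {s t T a : ℝ} (hb : BddAbove (pVarSet p f s T)) (hp : 1 ≤ p)
    (hf : ContinuousOn f (Icc s T)) (ht : t ∈ Icc s T) (ha : pVar p f s t < a) :
    ∀ᶠ r in 𝓝[Icc s T] t, pVar p f s r < a := by
  have hp0 : 0 < p := by positivity
  have hmono : ∀ r ∈ Icc s T, r ≤ t → pVar p f s r < a := fun r hr hrt =>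
    (pVar_mono (hb.mono (pVarSet_mono (Icc_subset_Icc le_rfl ht.2)))
      (Icc_subset_Icc le_rfl hrt)).trans_lt ha
  rcases ht.2.lt_or_eq with htT | rfl
  swap
  · exact eventually_nhdsWithin_of_forall fun r hr => hmono r hr hr.2
  set g : ℝ → ℝ := fun v => (pVar p f s t ^ p⁻¹ + v ^ p⁻¹) ^ p
  have hg : ContinuousAt g 0 :=
    (continuousAt_const.add (Real.continuousAt_rpow_const 0 p⁻¹ (Or.inr (by positivity)))
      ).rpow_const (Or.inr hp0.le)
  have hg0 : g 0 = pVar p f s t := by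
    simp only [g, Real.zero_rpow (inv_ne_zero hp0.ne'), add_zero,
      Real.rpow_inv_rpow (pVar_nonneg s t) hp0.ne']
  obtain ⟨ε, hεa, hε⟩ := ((hg.eventually (gt_mem_nhds (hg0 ▸ ha))).filter_mono
    nhdsWithin_le_nhds |>.and self_mem_nhdsWithin : ∀ᶠ v in 𝓝[>] 0, g v < a ∧ 0 < v).exists
  obtain ⟨u, hu, hVu⟩ := exists_pVar_le (hb.mono (pVarSet_mono (Icc_subset_Icc ht.1 le_rfl)))
    hp0 (hf.continuousWithinAt ⟨ht.1, htT.le⟩ |>.mono (Icc_subset_Icc ht.1 le_rfl)) htT hε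
  filter_upwards [self_mem_nhdsWithin, nhdsWithin_le_nhds (Iio_mem_nhds hu.1)] with r hr hru
  rcases le_or_gt r t with hrt | htr
  · exact hmono r hr hrt
  have hVr : pVar p f t r ≤ ε := (pVar_mono
    (hb.mono (pVarSet_mono (Icc_subset_Icc ht.1 hu.2))) (Icc_subset_Icc le_rfl hru.le)).trans hVu
  have := pVar_nonneg (p := p) (f := f) t r
  have := pVar_nonneg (p := p) (f := f) s t
  calc pVar p f s r ≤ g (pVar p f t r) :=
        pVar_le_rpow_add (hb.mono (pVarSet_mono (Icc_subset_Icc le_rfl hr.2))) hp ht.1 htr.le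
    _ ≤ g ε := by simp only [g]; gcongr
    _ < a := hεa

theorem continuousOn_pVar {s T : ℝ} (hb : BddAbove (pVarSet p f s T)) (hp : 1 ≤ p)
    (hf : ContinuousOn f (Icc s T)) : ContinuousOn (pVar p f s) (Icc s T) := fun _ ht =>
  tendsto_order.2 ⟨fun _ ha => eventually_lt_pVar hb (by positivity) hf ht ha,
    fun _ ha => eventually_pVar_lt hb hp hf ht ha⟩

theorem exists_reparam_dist_rpow_le (hp : 1 ≤ p) (hf : ContinuousOn f (Icc 0 1))
    (hb : BddAbove (pVarSet p f 0 1)) :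
    ∃ σ : ℝ → ℝ, Continuous σ ∧ StrictMono σ ∧ σ 0 = 0 ∧ σ 1 = 1 ∧ ∃ K, 0 ≤ K ∧
      ∀ x ∈ Icc (0 : ℝ) 1, ∀ y ∈ Icc (0 : ℝ) 1, x ≤ y →
        dist (f (σ y)) (f (σ x)) ^ p ≤ K * (y - x) := by
  have hmono : MonotoneOn (pVar p f 0) (Icc 0 1) := fun a _ b hb' hab =>
    pVar_mono (hb.mono (pVarSet_mono (Icc_subset_Icc le_rfl hb'.2))) (Icc_subset_Icc le_rfl hab)
  obtain ⟨σ, hσc, hσm, hσ0, hσ1, hσK⟩ :=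
    exists_reparam_sub_le (continuousOn_pVar hb hp hf) hmono
  have hσI : MapsTo σ (Icc 0 1) (Icc 0 1) := fun x hx =>
    ⟨hσ0 ▸ hσm.monotone hx.1, hσ1 ▸ hσm.monotone hx.2⟩
  refine ⟨σ, hσc, hσm, hσ0, hσ1, pVar p f 0 1 - pVar p f 0 0 + 1, ?_, fun x hx y hy hxy => ?_⟩
  · linarith [hmono ⟨le_rfl, zero_le_one⟩ ⟨zero_le_one, le_rfl⟩ zero_le_one]
  have := pVar_add_dist_rpow_le (hb.mono (pVarSet_mono (Icc_subset_Icc le_rfl (hσI hy).2)))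
    (by positivity) (hσI hx).1 (hσm.monotone hxy)
  linarith [hσK x y hx.1 hxy hy.2]

end PVariation

section Holder

variable {E : Type*} [PseudoMetricSpace E] {g : ℝ → E} {s : Set ℝ}

lemma dist_rpow_le_of_holder {C α : ℝ} (hα : 0 < α) (hC : 0 ≤ C)
    (h : ∀ x ∈ s, ∀ y ∈ s, dist (g x) (g y) ≤ C * |x - y| ^ α) :
    ∀ x ∈ s, ∀ y ∈ s, x ≤ y → dist (g y) (g x) ^ α⁻¹ ≤ C ^ α⁻¹ * (y - x) := by
  intro x hx y hy hxy
  calc dist (g y) (g x) ^ α⁻¹ ≤ (C * |y - x| ^ α) ^ α⁻¹ := by gcongr; exact h y hy x hx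
    _ = C ^ α⁻¹ * (y - x) := by
      rw [Real.mul_rpow hC (by positivity), Real.rpow_rpow_inv (abs_nonneg _) hα.ne',
        abs_of_nonneg (sub_nonneg.2 hxy)]

lemma holder_of_dist_rpow_le {K p : ℝ} (hp : 0 < p) (hK : 0 ≤ K)
    (h : ∀ x ∈ s, ∀ y ∈ s, x ≤ y → dist (g y) (g x) ^ p ≤ K * (y - x)) :
    ∀ x ∈ s, ∀ y ∈ s, dist (g x) (g y) ≤ K ^ p⁻¹ * |x - y| ^ p⁻¹ := by
  intro x hx y hy
  wlog hxy : x ≤ y generalizing x y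
  · rw [dist_comm, abs_sub_comm]
    exact this y hy x hx (le_of_not_ge hxy)
  calc dist (g x) (g y) = (dist (g y) (g x) ^ p) ^ p⁻¹ := by
        rw [dist_comm, Real.rpow_rpow_inv dist_nonneg hp.ne']
    _ ≤ (K * (y - x)) ^ p⁻¹ := by gcongr; exact h x hx y hy hxy
    _ = K ^ p⁻¹ * |x - y| ^ p⁻¹ := by
      rw [Real.mul_rpow hK (sub_nonneg.2 hxy), abs_sub_comm, abs_of_nonneg (sub_nonneg.2 hxy)]

end Holder

lemma pContentSums_eq_pVarSet (p : ℝ) (ψ : ℝ → EuclideanSpace ℝ (Fin 2)) :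
    pContentSums p ψ = pVarSet p ψ 0 1 := by
  ext S
  constructor
  · rintro ⟨n, t, ht, htI, rfl⟩
    refine ⟨List.ofFn t, ⟨List.pairwise_ofFn.2 fun i j hij => ht hij, ?_⟩, pVarSum_ofFn t⟩
    intro x hx
    obtain ⟨i, rfl⟩ := List.mem_ofFn.1 hx
    exact htI i
  · rintro ⟨_ | ⟨a, l⟩, ⟨hl, hmem⟩, rfl⟩
    · refine ⟨0, fun _ => 0, fun i j hij => ?_, fun _ => ⟨le_rfl, zero_le_one⟩, by simp⟩
      exact absurd (Subsingleton.elim (α := Fin 1) i j ▸ hij) (lt_irrefl j)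
    · refine ⟨l.length, (a :: l).get, List.sortedLT_iff_pairwise.2 hl, fun i => hmem _
        (List.get_mem _ _), ?_⟩
      rw [← pVarSum_ofFn, List.ofFn_get]

lemma IsLoopParam.comp {φ : ℝ → EuclideanSpace ℝ (Fin 2)} {Γ : Set (EuclideanSpace ℝ (Fin 2))}
    {σ : ℝ → ℝ} (hφ : IsLoopParam φ 1 Γ) (hσ : Continuous σ) (hσm : StrictMono σ) (h0 : σ 0 = 0)
    (h1 : σ 1 = 1) : IsLoopParam (φ ∘ σ) 1 Γ := by
  obtain ⟨hcont, himage, hends, hinj⟩ := hφ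
  have himageσ : σ '' Icc 0 1 = Icc 0 1 := by
    rw [hσ.continuousOn.image_Icc_of_monotoneOn zero_le_one (hσm.monotone.monotoneOn _), h0, h1]
  refine ⟨hcont.comp hσ.continuousOn (mapsTo_iff_image_subset.2 himageσ.subset), ?_,
    by simp [h0, h1, hends], ?_⟩
  · rw [image_comp, himageσ, himage]
  · refine hinj.comp hσm.injective.injOn fun x hx => ⟨h0 ▸ hσm.monotone hx.1, h1 ▸ hσm hx.2⟩

theorem holder_param_iff_finite_content_general (α : ℝ) (hα : α ∈ Set.Ioo (0:ℝ) 1)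
    (Γ : Set (EuclideanSpace ℝ (Fin 2))) :
    (∃ C : ℝ, 0 ≤ C ∧ ∃ φ : ℝ → EuclideanSpace ℝ (Fin 2), IsLoopParam φ 1 Γ ∧
      ∀ x ∈ Set.Icc (0:ℝ) 1, ∀ y ∈ Set.Icc (0:ℝ) 1,
        dist (φ x) (φ y) ≤ C * |x - y| ^ α) ↔
    (∃ ψ : ℝ → EuclideanSpace ℝ (Fin 2), IsLoopParam ψ 1 Γ ∧
      BddAbove (pContentSums (1 / α) ψ)) := by
  obtain ⟨hα0, hα1⟩ := hα
  have hp : 1 ≤ 1 / α := by rw [le_div_iff₀ hα0]; linarith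
  simp only [one_div] at hp ⊢
  constructor
  · rintro ⟨C, hC, φ, hφ, hholder⟩
    refine ⟨φ, hφ, C ^ α⁻¹ * (1 - 0), ?_⟩
    rw [pContentSums_eq_pVarSet]
    rintro _ ⟨l, ⟨hl, hmem⟩, rfl⟩
    exact pVarSum_le_of_dist_rpow_le (by positivity) zero_le_one
      (dist_rpow_le_of_holder hα0 hC hholder) (hl.imp le_of_lt) hmem
  · rintro ⟨ψ, hψ, hb⟩
    rw [pContentSums_eq_pVarSet] at hb
    obtain ⟨σ, hσc, hσm, hσ0, hσ1, K, hK, hσK⟩ := exists_reparam_dist_rpow_le hp hψ.1 hb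
    refine ⟨K ^ α, by positivity, ψ ∘ σ, hψ.comp hσc hσm hσ0 hσ1, ?_⟩
    simpa only [inv_inv] using holder_of_dist_rpow_le (g := ψ ∘ σ) (by positivity) hK hσK

/-- A Jordan curve admits an `α`-Hölder loop parametrization on `[0,1]`
iff it has finite `(1/α)`-content. -/
theorem holder_param_iff_finite_content (α : ℝ) (hα : α ∈ Set.Ioo (0:ℝ) 1)
    (Γ : Set (EuclideanSpace ℝ (Fin 2)))
    (hJordan : ∃ g : EuclideanSpace ℝ (Fin 2) → EuclideanSpace ℝ (Fin 2),
      ContinuousOn g (Metric.sphere 0 1) ∧ Set.InjOn g (Metric.sphere 0 1) ∧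
      g '' Metric.sphere 0 1 = Γ) :
    (∃ C : ℝ, 0 ≤ C ∧ ∃ φ : ℝ → EuclideanSpace ℝ (Fin 2), IsLoopParam φ 1 Γ ∧
      ∀ x ∈ Set.Icc (0:ℝ) 1, ∀ y ∈ Set.Icc (0:ℝ) 1,
        dist (φ x) (φ y) ≤ C * |x - y| ^ α) ↔
    (∃ ψ : ℝ → EuclideanSpace ℝ (Fin 2), IsLoopParam ψ 1 Γ ∧
      BddAbove (pContentSums (1 / α) ψ)) :=
  holder_param_iff_finite_content_general α hα Γ
end

section
/- Let α ∈ (0,1), set p = 1/α, and let Γ ⊂ ℝ² be a Jordan curve with finite p-content, V := |Γ|_p < ∞. Then there exists a loop parametrization φ : [0,V] → Γ satisfying |φ(s) − φ(t)| ≤ |s − t|^α for all s, t ∈ [0,V]. -/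
/-!
Let `F t` be the supremum of `∑ |ψ(t_{k+1}) - ψ(t_k)|^p` over partitions of `[0, t]`.
Concatenating partitions gives `F s + |ψ t - ψ s|^p ≤ F t` for `s ≤ t`; hence `F` is strictly
increasing (`ψ` is injective on `[0, 1)`) and `φ := ψ ∘ F⁻¹` satisfies `|φ u - φ v|^p ≤ |u - v|`.
The substance is the continuity of `F`, which makes it a bijection `[0, 1] → [0, V]`.
The variation of `ψ` on `[t₀, t]` tends to `0` as `t ↓ t₀`: otherwise, splitting off the
(small) first jump of near-optimal partitions of `[t₀, t]` contradicts superadditivity.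
Moreover `F t` exceeds `F t₀` plus this variation by at most the error made in the one jump
that straddles `t₀`, which is controlled by uniform continuity of `(x, y) ↦ |ψ x - ψ y|^p`.
The left-hand limits follow by reflecting `t ↦ -t`.
-/

open Set Metric

open Filter Topology

section PVariation

variable {E : Type*} [PseudoMetricSpace E] {p : ℝ} {f : ℝ → E}

noncomputable def powJumpSum (p : ℝ) (f : ℝ → E) : List ℝ → ℝ
  | x :: y :: l => dist (f y) (f x) ^ p + powJumpSum p f (y :: l)
  | _ => 0

@[simp] lemma powJumpSum_nil : powJumpSum p f [] = 0 := rfl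

@[simp] lemma powJumpSum_singleton (x : ℝ) : powJumpSum p f [x] = 0 := rfl

@[simp] lemma powJumpSum_cons_cons (x y : ℝ) (l : List ℝ) :
    powJumpSum p f (x :: y :: l) = dist (f y) (f x) ^ p + powJumpSum p f (y :: l) := rfl

lemma powJumpSum_nonneg : ∀ l : List ℝ, 0 ≤ powJumpSum p f l
  | [] | [_] => le_rfl
  | _ :: y :: l => add_nonneg (by positivity) (powJumpSum_nonneg (y :: l))

lemma powJumpSum_append_cons (l₁ : List ℝ) (x : ℝ) (l₂ : List ℝ) :
    powJumpSum p f (l₁ ++ x :: l₂) = powJumpSum p f (l₁ ++ [x]) + powJumpSum p f (x :: l₂) := by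
  induction l₁ with
  | nil => simp
  | cons y l₁ ih =>
    cases l₁ with
    | nil => simp
    | cons z l₁ =>
      simp only [List.cons_append, powJumpSum_cons_cons] at ih ⊢
      rw [ih, add_assoc]

lemma powJumpSum_add_le_append : ∀ l₁ l₂ : List ℝ,
    powJumpSum p f l₁ + powJumpSum p f l₂ ≤ powJumpSum p f (l₁ ++ l₂)
  | [], _ => by simp
  | [x], [] => by simp
  | [x], y :: l => by simpa using Real.rpow_nonneg dist_nonneg p
  | x :: y :: l₁, l₂ => by
    simpa [add_assoc] using powJumpSum_add_le_append (y :: l₁) l₂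

lemma powJumpSum_comp_neg : ∀ l : List ℝ,
    powJumpSum p (f ∘ Neg.neg) (l.map Neg.neg).reverse = powJumpSum p f l
  | [] | [_] => by simp
  | x :: y :: l => by
    have := powJumpSum_comp_neg (y :: l)
    simp only [List.map_cons, List.reverse_cons, List.append_assoc, List.singleton_append] at this ⊢
    rw [powJumpSum_append_cons, this]
    simp [dist_comm, add_comm]

lemma powJumpSum_ofFn {n : ℕ} (t : Fin (n + 1) → ℝ) :
    powJumpSum p f (List.ofFn t) = ∑ i : Fin n, dist (f (t i.succ)) (f (t i.castSucc)) ^ p := by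
  induction n with
  | zero => simp
  | succ n ih =>
    have := ih (fun i => t i.succ)
    simp only [List.ofFn_succ] at this ⊢
    rw [powJumpSum_cons_cons, this, Fin.sum_univ_succ]
    rfl

lemma exists_pairwise_lt_powJumpSum_eq (hp : p ≠ 0) {l : List ℝ} (hl : l.Pairwise (· ≤ ·)) :
    ∃ l' : List ℝ, l'.Pairwise (· < ·) ∧ (∀ x ∈ l', x ∈ l) ∧ l'.head? = l.head? ∧
      powJumpSum p f l' = powJumpSum p f l := by
  induction l with
  | nil => exact ⟨[], by simp⟩
  | cons x l ih =>
    obtain ⟨hx, hl⟩ := List.pairwise_cons.1 hl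
    obtain ⟨l', hl', hl'l, hhead, hsum⟩ := ih hl
    rcases l with _ | ⟨y, r⟩
    · exact ⟨[x], by simp⟩
    rcases (hx y (by simp)).eq_or_lt with rfl | hxy
    · refine ⟨l', hl', fun z hz => List.mem_cons_of_mem _ (hl'l z hz), hhead, ?_⟩
      rw [hsum, powJumpSum_cons_cons, dist_self, Real.zero_rpow hp, zero_add]
    obtain ⟨l'', rfl⟩ : ∃ l'', l' = y :: l'' := by
      rcases l' with _ | ⟨z, l''⟩ <;> simp_all
    refine ⟨x :: y :: l'', List.pairwise_cons.2 ⟨fun z hz => ?_, hl'⟩, ?_, rfl, ?_⟩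
    · rcases List.mem_cons.1 (hl'l z hz) with rfl | hz
      exacts [hxy, hxy.trans_le ((List.pairwise_cons.1 hl).1 z hz)]
    · rintro z (_ | ⟨_, hz⟩)
      exacts [List.mem_cons_self, List.mem_cons_of_mem _ (hl'l z hz)]
    · rw [powJumpSum_cons_cons, hsum, powJumpSum_cons_cons]

/-- Partitions are weakly increasing lists: a repeated point adds a jump `0 ^ p`, which is `0`
for `p ≠ 0`. Since `sSup` of an unbounded set of reals is `0`, `pVariationOn` is only meaningful
under a `BddAbove (pVariationSums p f s)` hypothesis. -/
def pVariationSums (p : ℝ) (f : ℝ → E) (s : Set ℝ) : Set ℝ :=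
  powJumpSum p f '' {l | l.Pairwise (· ≤ ·) ∧ ∀ x ∈ l, x ∈ s}

noncomputable def pVariationOn (p : ℝ) (f : ℝ → E) (s : Set ℝ) : ℝ :=
  sSup (pVariationSums p f s)

variable {s t : Set ℝ} {a b c : ℝ}

lemma pVariationSums_nonempty : (pVariationSums p f s).Nonempty :=
  ⟨_, mem_image_of_mem _ (show [] ∈ {l : List ℝ | _} by simp)⟩

lemma pVariationSums_mono (h : s ⊆ t) : pVariationSums p f s ⊆ pVariationSums p f t :=
  image_mono fun _ hl => ⟨hl.1, fun x hx => h (hl.2 x hx)⟩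

lemma pVariationOn_nonneg : 0 ≤ pVariationOn p f s :=
  Real.sSup_nonneg <| forall_mem_image.2 fun l _ => powJumpSum_nonneg l

lemma powJumpSum_le_pVariationOn (hB : BddAbove (pVariationSums p f s)) {l : List ℝ}
    (hl : l.Pairwise (· ≤ ·)) (hls : ∀ x ∈ l, x ∈ s) : powJumpSum p f l ≤ pVariationOn p f s :=
  le_csSup hB (mem_image_of_mem _ ⟨hl, hls⟩)

lemma pVariationOn_le {C : ℝ}
    (h : ∀ l : List ℝ, l.Pairwise (· ≤ ·) → (∀ x ∈ l, x ∈ s) → powJumpSum p f l ≤ C) :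
    pVariationOn p f s ≤ C :=
  csSup_le pVariationSums_nonempty <| forall_mem_image.2 fun l hl => h l hl.1 hl.2

lemma pVariationOn_mono (hB : BddAbove (pVariationSums p f t)) (h : s ⊆ t) :
    pVariationOn p f s ≤ pVariationOn p f t :=
  csSup_le_csSup hB pVariationSums_nonempty (pVariationSums_mono h)

lemma pVariationOn_add_le_union (hst : ∀ x ∈ s, ∀ y ∈ t, x ≤ y)
    (hB : BddAbove (pVariationSums p f (s ∪ t))) :
    pVariationOn p f s + pVariationOn p f t ≤ pVariationOn p f (s ∪ t) := by
  rw [pVariationOn, pVariationOn, ← csSup_add pVariationSums_nonempty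
    (hB.mono (pVariationSums_mono subset_union_left)) pVariationSums_nonempty
    (hB.mono (pVariationSums_mono subset_union_right))]
  refine csSup_le (pVariationSums_nonempty.add pVariationSums_nonempty) ?_
  rintro _ ⟨_, ⟨l₁, ⟨hl₁, hl₁s⟩, rfl⟩, _, ⟨l₂, ⟨hl₂, hl₂t⟩, rfl⟩, rfl⟩
  refine (powJumpSum_add_le_append l₁ l₂).trans (powJumpSum_le_pVariationOn hB ?_ ?_)
  · exact List.pairwise_append.2 ⟨hl₁, hl₂, fun x hx y hy => hst x (hl₁s x hx) y (hl₂t y hy)⟩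
  · simp only [List.mem_append]
    rintro x (hx | hx)
    exacts [Or.inl (hl₁s x hx), Or.inr (hl₂t x hx)]

lemma dist_rpow_le_pVariationOn (hB : BddAbove (pVariationSums p f s)) (ha : a ∈ s) (hb : b ∈ s)
    (hab : a ≤ b) : dist (f b) (f a) ^ p ≤ pVariationOn p f s := by
  simpa using powJumpSum_le_pVariationOn (l := [a, b]) hB (by simpa using hab) (by simp [ha, hb])

lemma pVariationOn_Icc_add_le (hB : BddAbove (pVariationSums p f (Icc a c))) (hab : a ≤ b)
    (hbc : b ≤ c) :
    pVariationOn p f (Icc a b) + pVariationOn p f (Icc b c) ≤ pVariationOn p f (Icc a c) := by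
  rw [← Icc_union_Icc_eq_Icc hab hbc] at hB ⊢
  exact pVariationOn_add_le_union (fun x hx y hy => hx.2.trans hy.1) hB

lemma pVariationOn_Icc_self (hB : BddAbove (pVariationSums p f (Icc a a))) :
    pVariationOn p f (Icc a a) = 0 := by
  linarith [pVariationOn_Icc_add_le hB le_rfl le_rfl,
    pVariationOn_nonneg (p := p) (f := f) (s := Icc a a)]

lemma pVariationOn_Icc_add_dist_rpow_le (hB : BddAbove (pVariationSums p f (Icc a c)))
    (hab : a ≤ b) (hbc : b ≤ c) :
    pVariationOn p f (Icc a b) + dist (f c) (f b) ^ p ≤ pVariationOn p f (Icc a c) := by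
  have := dist_rpow_le_pVariationOn (hB.mono (pVariationSums_mono (Icc_subset_Icc hab le_rfl)))
    (left_mem_Icc.2 hbc) (right_mem_Icc.2 hbc) hbc
  linarith [pVariationOn_Icc_add_le hB hab hbc]

lemma pVariationSums_comp_neg : pVariationSums p (f ∘ Neg.neg) (-s) = pVariationSums p f s := by
  have key (g : ℝ → E) (t : Set ℝ) :
      pVariationSums p g t ⊆ pVariationSums p (g ∘ Neg.neg) (-t) := by
    rintro _ ⟨l, ⟨hl, hlt⟩, rfl⟩
    refine ⟨(l.map Neg.neg).reverse, ⟨?_, ?_⟩, powJumpSum_comp_neg l⟩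
    · simpa [List.pairwise_reverse, List.pairwise_map] using hl
    · simp only [List.mem_reverse, List.mem_map]
      rintro _ ⟨x, hx, rfl⟩
      simpa using hlt x hx
  refine Subset.antisymm ?_ (key f s)
  simpa [Function.comp_def] using key (f ∘ Neg.neg) (-s)

lemma exists_pos_dist_rpow_lt_add (hp : 0 ≤ p) (hf : ContinuousOn f (Icc a b)) {ε : ℝ}
    (hε : 0 < ε) : ∃ δ > 0, ∀ x ∈ Icc a b, ∀ y ∈ Icc a b, ∀ z ∈ Icc a b, dist y z < δ →
      dist (f y) (f x) ^ p < dist (f z) (f x) ^ p + ε := by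
  have hc : ContinuousOn (fun q : ℝ × ℝ => dist (f q.1) (f q.2) ^ p) (Icc a b ×ˢ Icc a b) :=
    (continuous_dist.comp_continuousOn ((hf.comp continuousOn_fst mapsTo_fst_prod).prodMk
      (hf.comp continuousOn_snd mapsTo_snd_prod))).rpow_const fun _ _ => Or.inr hp
  obtain ⟨δ, hδ, h⟩ := Metric.uniformContinuousOn_iff.1
    ((isCompact_Icc.prod isCompact_Icc).uniformContinuousOn_of_continuous hc) ε hε
  refine ⟨δ, hδ, fun x hx y hy z hz hyz => ?_⟩
  have := h (y, x) ⟨hy, hx⟩ (z, x) ⟨hz, hx⟩ (by simpa [Prod.dist_eq] using hyz)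
  rw [Real.dist_eq] at this
  linarith [le_abs_self (dist (f y) (f x) ^ p - dist (f z) (f x) ^ p)]

lemma exists_eq_append_of_pairwise_le {α : Type*} [LinearOrder α] {l : List α}
    (hl : l.Pairwise (· ≤ ·)) (b : α) :
    ∃ l₁ l₂, l = l₁ ++ l₂ ∧ (∀ x ∈ l₁, x ≤ b) ∧ ∀ y ∈ l₂, b ≤ y := by
  induction l with
  | nil => exact ⟨[], [], rfl, by simp, by simp⟩
  | cons x l ih =>
    obtain ⟨hx, hl⟩ := List.pairwise_cons.1 hl
    by_cases hxb : x ≤ b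
    · obtain ⟨l₁, l₂, rfl, h₁, h₂⟩ := ih hl
      exact ⟨x :: l₁, l₂, rfl, by simpa [hxb] using h₁, h₂⟩
    · refine ⟨[], x :: l, rfl, by simp, ?_⟩
      simp only [List.mem_cons, forall_eq_or_imp]
      exact ⟨(not_le.1 hxb).le, fun y hy => (not_le.1 hxb).le.trans (hx y hy)⟩

lemma pVariationOn_Icc_le_add_add (hB : BddAbove (pVariationSums p f (Icc a c))) (hab : a ≤ b)
    (hbc : b ≤ c) {ε : ℝ} (hε : 0 ≤ ε)
    (hcross : ∀ x ∈ Icc a b, ∀ y ∈ Icc b c, dist (f y) (f x) ^ p ≤ dist (f b) (f x) ^ p + ε) :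
    pVariationOn p f (Icc a c) ≤ pVariationOn p f (Icc a b) + pVariationOn p f (Icc b c) + ε := by
  have hB₁ := hB.mono (pVariationSums_mono (Icc_subset_Icc le_rfl hbc))
  have hB₂ := hB.mono (pVariationSums_mono (Icc_subset_Icc hab le_rfl))
  have h₁ := pVariationOn_nonneg (p := p) (f := f) (s := Icc a b)
  have h₂ := pVariationOn_nonneg (p := p) (f := f) (s := Icc b c)
  refine pVariationOn_le fun l hl hls => ?_
  obtain ⟨l₁, l₂, rfl, hl₁b, hl₂b⟩ := exists_eq_append_of_pairwise_le hl b
  have hl₁ : ∀ x ∈ l₁, x ∈ Icc a b := fun x hx => ⟨(hls x (by simp [hx])).1, hl₁b x hx⟩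
  have hl₂ : ∀ y ∈ l₂, y ∈ Icc b c := fun y hy => ⟨hl₂b y hy, (hls y (by simp [hy])).2⟩
  obtain ⟨hl₁s, hl₂s, -⟩ := List.pairwise_append.1 hl
  rcases List.eq_nil_or_concat' l₁ with rfl | ⟨l₁, x, rfl⟩
  · rw [List.nil_append]
    linarith [powJumpSum_le_pVariationOn hB₂ hl₂s hl₂]
  rcases l₂ with _ | ⟨y, l₂⟩
  · rw [List.append_nil]
    linarith [powJumpSum_le_pVariationOn hB₁ hl₁s hl₁]
  have hx : x ∈ Icc a b := hl₁ x (by simp)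
  have hy : y ∈ Icc b c := hl₂ y (by simp)
  -- Trade the jump from `x ≤ b` to `y ≥ b` for the jump from `x` to `b`.
  have hleft : powJumpSum p f (l₁ ++ [x]) + dist (f b) (f x) ^ p ≤ pVariationOn p f (Icc a b) := by
    have := powJumpSum_le_pVariationOn (l := l₁ ++ [x] ++ [b]) hB₁
      (List.pairwise_append.2 ⟨hl₁s, by simp, by simpa using hl₁b⟩) fun z hz => ?_
    · rwa [List.append_assoc, List.singleton_append, powJumpSum_append_cons,
        powJumpSum_cons_cons, powJumpSum_singleton, add_zero] at this
    rcases List.mem_append.1 hz with hz | hz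
    exacts [hl₁ z hz, by rw [List.mem_singleton.1 hz]; exact right_mem_Icc.2 hab]
  rw [List.append_assoc, List.singleton_append, powJumpSum_append_cons,
    powJumpSum_cons_cons]
  linarith [powJumpSum_le_pVariationOn hB₂ hl₂s hl₂, hcross x hx y hy]

lemma exists_pVariationOn_Icc_lt (hp : 0 < p) (hab : a < b) (hf : ContinuousOn f (Icc a b))
    (hB : BddAbove (pVariationSums p f (Icc a b))) {ε : ℝ} (hε : 0 < ε) :
    ∃ c ∈ Ioc a b, pVariationOn p f (Icc a c) < ε := by
  by_contra! hlarge
  obtain ⟨δ, hδ, hjump⟩ := exists_pos_dist_rpow_lt_add hp.le hf (half_pos hε)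
  set c := min b (a + δ / 2)
  have hc : c ∈ Ioc a b := ⟨lt_min hab (by linarith), min_le_left _ _⟩
  have hcδ : c ≤ a + δ / 2 := min_le_right _ _
  have hBc := hB.mono (pVariationSums_mono (Icc_subset_Icc le_rfl hc.2))
  have hsmall : ∀ x ∈ Icc a c, ∀ y ∈ Icc a c, dist (f y) (f x) ^ p < ε / 2 := by
    intro x hx y hy
    have hcb : Icc a c ⊆ Icc a b := Icc_subset_Icc le_rfl hc.2
    have := hjump x (hcb hx) y (hcb hy) x (hcb hx) (by
      rw [Real.dist_eq, abs_lt]; constructor <;> linarith [hx.1, hx.2, hy.1, hy.2])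
    rwa [dist_self, Real.zero_rpow hp.ne', zero_add] at this
  -- A partition of `[a, c]` whose first jump ends at `y > a` continues inside `[y, c]`, where
  -- the variation is at most `pVariationOn p f (Icc a c) - ε` by superadditivity.
  have key : ∀ l : List ℝ, l.Pairwise (· ≤ ·) → (∀ x ∈ l, x ∈ Icc a c) →
      powJumpSum p f l ≤ pVariationOn p f (Icc a c) - ε / 2 := by
    intro l
    induction l with
    | nil => intros; simp only [powJumpSum_nil]; linarith [hlarge c hc]
    | cons x l ih =>
      rcases l with _ | ⟨y, l⟩
      · intros; simp only [powJumpSum_singleton]; linarith [hlarge c hc]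
      intro hl hls
      obtain ⟨hxl, hyl⟩ := List.pairwise_cons.1 hl
      have hx : x ∈ Icc a c := hls x (by simp)
      have hy : y ∈ Icc a c := hls y (by simp)
      rw [powJumpSum_cons_cons]
      rcases (hxl y (by simp)).eq_or_lt with rfl | hxy
      · rw [dist_self, Real.zero_rpow hp.ne', zero_add]
        exact ih hyl fun z hz => hls z (List.mem_cons_of_mem _ hz)
      have hrest : powJumpSum p f (y :: l) ≤ pVariationOn p f (Icc y c) := by
        refine powJumpSum_le_pVariationOn
          (hBc.mono (pVariationSums_mono (Icc_subset_Icc hy.1 le_rfl))) hyl fun z hz => ?_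
        refine ⟨?_, (hls z (List.mem_cons_of_mem _ hz)).2⟩
        rcases List.mem_cons.1 hz with rfl | hz
        exacts [le_rfl, (List.pairwise_cons.1 hyl).1 z hz]
      linarith [pVariationOn_Icc_add_le (p := p) (f := f) hBc hy.1 hy.2, hsmall x hx y hy,
        hlarge y ⟨hx.1.trans_lt hxy, hy.2.trans hc.2⟩]
  linarith [pVariationOn_le key]

lemma exists_pVariationOn_Icc_lt' (hp : 0 < p) (hab : a < b) (hf : ContinuousOn f (Icc a b))
    (hB : BddAbove (pVariationSums p f (Icc a b))) {ε : ℝ} (hε : 0 < ε) :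
    ∃ c ∈ Ico a b, pVariationOn p f (Icc c b) < ε := by
  obtain ⟨c, hc, hcε⟩ := exists_pVariationOn_Icc_lt (f := f ∘ Neg.neg) hp (neg_lt_neg hab)
    (hf.comp continuousOn_neg fun x hx => ⟨le_neg.1 hx.2, neg_le.1 hx.1⟩)
    (by rwa [← neg_Icc, pVariationSums_comp_neg]) hε
  refine ⟨-c, ⟨le_neg.1 hc.2, neg_lt.1 hc.1⟩, ?_⟩
  rwa [← neg_neg c, ← neg_Icc, pVariationOn, pVariationSums_comp_neg] at hcε

lemma continuousWithinAt_pVariationOn_Icc_right (hp : 0 < p) (hf : ContinuousOn f (Icc a b))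
    (hB : BddAbove (pVariationSums p f (Icc a b))) {t₀ : ℝ} (ht₀ : t₀ ∈ Icc a b) :
    ContinuousWithinAt (fun t => pVariationOn p f (Icc a t)) (Icc t₀ b) t₀ := by
  rcases ht₀.2.eq_or_lt with rfl | htb
  · rw [Icc_self]
    exact continuousWithinAt_singleton
  have hBt : ∀ t ∈ Icc t₀ b, BddAbove (pVariationSums p f (Icc a t)) := fun t ht =>
    hB.mono (pVariationSums_mono (Icc_subset_Icc le_rfl ht.2))
  refine tendsto_order.2 ⟨fun m hm => ?_, fun m hm => ?_⟩
  · filter_upwards [self_mem_nhdsWithin] with t ht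
    exact hm.trans_le (pVariationOn_mono (hBt t ht) (Icc_subset_Icc le_rfl ht.1))
  obtain ⟨ε, hε, hεm⟩ : ∃ ε > 0, pVariationOn p f (Icc a t₀) + 2 * ε < m :=
    ⟨(m - pVariationOn p f (Icc a t₀)) / 3, by linarith, by linarith⟩
  obtain ⟨c, hc, hcε⟩ := exists_pVariationOn_Icc_lt hp htb
    (hf.mono (Icc_subset_Icc ht₀.1 le_rfl)) (hB.mono (pVariationSums_mono
      (Icc_subset_Icc ht₀.1 le_rfl))) hε
  obtain ⟨δ, hδ, hjump⟩ := exists_pos_dist_rpow_lt_add hp.le hf hε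
  filter_upwards [self_mem_nhdsWithin, nhdsWithin_le_nhds (Iic_mem_nhds hc.1),
    nhdsWithin_le_nhds (Iio_mem_nhds (lt_add_of_pos_right t₀ hδ))] with t ht htc htδ
  have hsub : Icc a t ⊆ Icc a b := Icc_subset_Icc le_rfl ht.2
  have hcross : ∀ x ∈ Icc a t₀, ∀ y ∈ Icc t₀ t,
      dist (f y) (f x) ^ p ≤ dist (f t₀) (f x) ^ p + ε := fun x hx y hy =>
    (hjump x (hsub ⟨hx.1, hx.2.trans ht.1⟩) y (hsub ⟨ht₀.1.trans hy.1, hy.2⟩) t₀ ht₀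
      (by rw [Real.dist_eq, abs_lt]; constructor <;> linarith [hy.1, hy.2, mem_Iio.1 htδ])).le
  have := pVariationOn_Icc_le_add_add (hBt t ht) ht₀.1 ht.1 hε.le hcross
  have := pVariationOn_mono (hB.mono (pVariationSums_mono (Icc_subset_Icc ht₀.1 hc.2)))
    (Icc_subset_Icc le_rfl (mem_Iic.1 htc)) (p := p) (f := f)
  linarith

lemma continuousWithinAt_pVariationOn_Icc_left (hp : 0 < p) (hf : ContinuousOn f (Icc a b))
    (hB : BddAbove (pVariationSums p f (Icc a b))) {t₀ : ℝ} (ht₀ : t₀ ∈ Icc a b) :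
    ContinuousWithinAt (fun t => pVariationOn p f (Icc a t)) (Icc a t₀) t₀ := by
  rcases ht₀.1.eq_or_lt with rfl | hat
  · rw [Icc_self]
    exact continuousWithinAt_singleton
  have hB₀ : BddAbove (pVariationSums p f (Icc a t₀)) :=
    hB.mono (pVariationSums_mono (Icc_subset_Icc le_rfl ht₀.2))
  refine tendsto_order.2 ⟨fun m hm => ?_, fun m hm => ?_⟩
  swap
  · filter_upwards [self_mem_nhdsWithin] with t ht
    exact (pVariationOn_mono hB₀ (Icc_subset_Icc le_rfl ht.2)).trans_lt hm
  obtain ⟨ε, hε, hεm⟩ : ∃ ε > 0, m + 2 * ε < pVariationOn p f (Icc a t₀) :=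
    ⟨(pVariationOn p f (Icc a t₀) - m) / 3, by linarith, by linarith⟩
  obtain ⟨c, hc, hcε⟩ := exists_pVariationOn_Icc_lt' hp hat
    (hf.mono (Icc_subset_Icc le_rfl ht₀.2)) hB₀ hε
  obtain ⟨δ, hδ, hjump⟩ := exists_pos_dist_rpow_lt_add hp.le hf hε
  filter_upwards [self_mem_nhdsWithin, nhdsWithin_le_nhds (Ici_mem_nhds hc.2),
    nhdsWithin_le_nhds (Ioi_mem_nhds (sub_lt_self t₀ hδ))] with t ht htc htδ
  have hsub : Icc a t₀ ⊆ Icc a b := Icc_subset_Icc le_rfl ht₀.2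
  have hcross : ∀ x ∈ Icc a t, ∀ y ∈ Icc t t₀,
      dist (f y) (f x) ^ p ≤ dist (f t) (f x) ^ p + ε := fun x hx y hy =>
    (hjump x (hsub ⟨hx.1, hx.2.trans ht.2⟩) y (hsub ⟨ht.1.trans hy.1, hy.2⟩) t (hsub ht)
      (by rw [Real.dist_eq, abs_lt]; constructor <;> linarith [hy.1, hy.2, mem_Ioi.1 htδ])).le
  have := pVariationOn_Icc_le_add_add hB₀ ht.1 ht.2 hε.le hcross
  have := pVariationOn_mono (hB₀.mono (pVariationSums_mono (Icc_subset_Icc hc.1 le_rfl)))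
    (Icc_subset_Icc (mem_Ici.1 htc) le_rfl) (p := p) (f := f)
  linarith

theorem continuousOn_pVariationOn_Icc (hp : 0 < p) (hf : ContinuousOn f (Icc a b))
    (hB : BddAbove (pVariationSums p f (Icc a b))) :
    ContinuousOn (fun t => pVariationOn p f (Icc a t)) (Icc a b) := fun t₀ ht₀ => by
  rw [← Icc_union_Icc_eq_Icc ht₀.1 ht₀.2]
  exact (continuousWithinAt_pVariationOn_Icc_left hp hf hB ht₀).union
    (continuousWithinAt_pVariationOn_Icc_right hp hf hB ht₀)

lemma dist_comp_invFunOn_le {F : ℝ → ℝ} {s t : Set ℝ} (hp : 0 < p) (hF : SurjOn F s t)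
    (h : ∀ x ∈ s, ∀ y ∈ s, x ≤ y → dist (f y) (f x) ^ p ≤ F y - F x) {u v : ℝ} (hu : u ∈ t)
    (hv : v ∈ t) :
    dist (f (Function.invFunOn F s u)) (f (Function.invFunOn F s v)) ≤ |u - v| ^ p⁻¹ := by
  rw [Real.le_rpow_inv_iff_of_pos dist_nonneg (abs_nonneg _) hp]
  have key : ∀ u ∈ t, ∀ v ∈ t, Function.invFunOn F s u ≤ Function.invFunOn F s v →
      dist (f (Function.invFunOn F s v)) (f (Function.invFunOn F s u)) ^ p ≤ |u - v| := by
    intro u hu v hv huv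
    have := h _ (hF.mapsTo_invFunOn hu) _ (hF.mapsTo_invFunOn hv) huv
    rw [hF.rightInvOn_invFunOn hu, hF.rightInvOn_invFunOn hv] at this
    exact this.trans ((le_abs_self _).trans (abs_sub_comm _ _).le)
  rcases le_total (Function.invFunOn F s u) (Function.invFunOn F s v) with huv | hvu
  · rw [dist_comm]
    exact key u hu v hv huv
  · rw [abs_sub_comm]
    exact key v hv u hu hvu

lemma continuousOn_of_dist_le_abs_sub_rpow {g : ℝ → E} {s : Set ℝ} {α : ℝ} (hα : 0 < α)
    (h : ∀ u ∈ s, ∀ v ∈ s, dist (g u) (g v) ≤ |u - v| ^ α) : ContinuousOn g s := by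
  have : HolderOnWith 1 α.toNNReal g s := fun u hu v hv => by
    rw [ENNReal.coe_one, one_mul, edist_dist, edist_dist, Real.coe_toNNReal _ hα.le,
      ENNReal.ofReal_rpow_of_nonneg dist_nonneg hα.le, Real.dist_eq]
    exact ENNReal.ofReal_le_ofReal (h u hu v hv)
  exact this.continuousOn (Real.toNNReal_pos.2 hα)

end PVariation

section MetricSpace

variable {E : Type*} [MetricSpace E] {p : ℝ} {f : ℝ → E} {a b : ℝ}

lemma strictMonoOn_pVariationOn_Icc (hB : BddAbove (pVariationSums p f (Icc a b)))
    (hf : InjOn f (Ico a b)) : StrictMonoOn (fun t => pVariationOn p f (Icc a t)) (Icc a b) := by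
  intro s hs t ht hst
  have hm : s < (s + t) / 2 := by linarith
  have hmt : (s + t) / 2 < t := by linarith
  have hjump : 0 < dist (f ((s + t) / 2)) (f s) ^ p := by
    refine Real.rpow_pos_of_pos (dist_pos.2 fun h => hm.ne' (hf ⟨?_, ?_⟩ ⟨hs.1, ?_⟩ h)) p <;>
      linarith [hs.1, ht.2]
  calc pVariationOn p f (Icc a s)
      < pVariationOn p f (Icc a s) + dist (f ((s + t) / 2)) (f s) ^ p := by linarith
    _ ≤ pVariationOn p f (Icc a ((s + t) / 2)) :=
        pVariationOn_Icc_add_dist_rpow_le (hB.mono (pVariationSums_mono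
          (Icc_subset_Icc le_rfl (by linarith [ht.2])))) hs.1 hm.le
    _ ≤ pVariationOn p f (Icc a t) :=
        pVariationOn_mono (hB.mono (pVariationSums_mono (Icc_subset_Icc le_rfl ht.2)))
          (Icc_subset_Icc le_rfl hmt.le)

end MetricSpace

lemma StrictMonoOn.bijOn_Icc {F : ℝ → ℝ} {a b : ℝ} (hF : StrictMonoOn F (Icc a b))
    (hc : ContinuousOn F (Icc a b)) (hab : a ≤ b) : BijOn F (Icc a b) (Icc (F a) (F b)) :=
  ⟨fun _ hx => ⟨hF.monotoneOn (left_mem_Icc.2 hab) hx hx.1,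
    hF.monotoneOn hx (right_mem_Icc.2 hab) hx.2⟩, hF.injOn, intermediate_value_Icc hab hc⟩

lemma IsLoopParam.comp_invFunOn {ψ : ℝ → EuclideanSpace ℝ (Fin 2)} {Γ} {F : ℝ → ℝ} {V : ℝ}
    (hψ : IsLoopParam ψ 1 Γ) (hF : BijOn F (Icc 0 1) (Icc 0 V)) (hF0 : F 0 = 0) (hF1 : F 1 = V)
    (hc : ContinuousOn (ψ ∘ Function.invFunOn F (Icc 0 1)) (Icc 0 V)) :
    IsLoopParam (ψ ∘ Function.invFunOn F (Icc 0 1)) V Γ := by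
  obtain ⟨-, hψΓ, hψ01, hψinj⟩ := hψ
  set G := Function.invFunOn F (Icc 0 1)
  have hinv : InvOn G F (Icc 0 1) (Icc 0 V) := hF.invOn_invFunOn
  have hG : BijOn G (Icc 0 V) (Icc 0 1) := hF.symm hinv.symm
  have hGF {x : ℝ} (hx : x ∈ Icc 0 1) : G (F x) = x := hinv.1 hx
  have hG1 {u : ℝ} (hu : u ∈ Ico 0 V) : G u ∈ Ico 0 1 := by
    refine ⟨(hG.mapsTo (Ico_subset_Icc_self hu)).1,
      (hG.mapsTo (Ico_subset_Icc_self hu)).2.lt_of_ne fun h => hu.2.ne ?_⟩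
    rw [← hF1, ← h, hinv.2 (Ico_subset_Icc_self hu)]
  refine ⟨hc, by rw [image_comp, hG.image_eq, hψΓ], ?_, fun u hu v hv huv => ?_⟩
  · simp only [Function.comp_apply]
    rw [← hF0, hGF (left_mem_Icc.2 zero_le_one), ← hF1, hGF (right_mem_Icc.2 zero_le_one), hψ01]
  · exact hG.injOn (Ico_subset_Icc_self hu) (Ico_subset_Icc_self hv) (hψinj (hG1 hu) (hG1 hv) huv)

lemma pContentSums_subset_pVariationSums (p : ℝ) (ψ : ℝ → EuclideanSpace ℝ (Fin 2)) :
    pContentSums p ψ ⊆ pVariationSums p ψ (Icc 0 1) := by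
  rintro _ ⟨n, t, ht, ht01, rfl⟩
  refine ⟨List.ofFn t, ⟨List.pairwise_ofFn.2 fun i j hij => (ht hij).le, ?_⟩, powJumpSum_ofFn t⟩
  simp only [List.mem_ofFn]
  rintro _ ⟨i, rfl⟩
  exact ht01 i

lemma exists_mem_pContentSums_le {p : ℝ} (hp : p ≠ 0) {ψ : ℝ → EuclideanSpace ℝ (Fin 2)} {S : ℝ}
    (hS : S ∈ pVariationSums p ψ (Icc 0 1)) : ∃ S' ∈ pContentSums p ψ, S ≤ S' := by
  obtain ⟨l, ⟨hl, hl01⟩, rfl⟩ := hS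
  obtain ⟨l', hl', hl'l, -, hsum⟩ := exists_pairwise_lt_powJumpSum_eq (f := ψ) hp hl
  rw [← hsum]
  rcases l' with _ | ⟨x, l'⟩
  · exact ⟨0, ⟨0, fun _ => 0, Subsingleton.strictMono (α := Fin 1) _, by simp, by simp⟩, by simp⟩
  refine ⟨_, ⟨l'.length, (x :: l').get, (List.sortedLT_iff_pairwise.2 hl').strictMono_get,
    fun i => hl01 _ (hl'l _ (List.get_mem _ _)), rfl⟩, ?_⟩
  rw [← powJumpSum_ofFn, List.ofFn_get]

lemma bddAbove_pVariationSums_of_pContentSums {p : ℝ} (hp : p ≠ 0)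
    {ψ : ℝ → EuclideanSpace ℝ (Fin 2)} (h : BddAbove (pContentSums p ψ)) :
    BddAbove (pVariationSums p ψ (Icc 0 1)) := by
  obtain ⟨M, hM⟩ := h
  refine ⟨M, fun S hS => ?_⟩
  obtain ⟨S', hS', hSS'⟩ := exists_mem_pContentSums_le hp hS
  exact hSS'.trans (hM hS')

lemma sSup_pContentSums {p : ℝ} (hp : p ≠ 0) (ψ : ℝ → EuclideanSpace ℝ (Fin 2)) :
    sSup (pContentSums p ψ) = pVariationOn p ψ (Icc 0 1) :=
  csSup_eq_csSup_of_forall_exists_le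
    (fun S hS => ⟨S, pContentSums_subset_pVariationSums p ψ hS, le_rfl⟩)
    (fun _ hS => exists_mem_pContentSums_le hp hS)

theorem param_of_finite_content_general (α p : ℝ) (hα : α ∈ Set.Ioo (0:ℝ) 1) (hp : p = 1 / α)
    (Γ : Set (EuclideanSpace ℝ (Fin 2)))
    (ψ : ℝ → EuclideanSpace ℝ (Fin 2)) (hψ : IsLoopParam ψ 1 Γ)
    (hBdd : BddAbove (pContentSums p ψ))
    (V : ℝ) (hV : V = sSup (pContentSums p ψ)) :
    ∃ φ : ℝ → EuclideanSpace ℝ (Fin 2), IsLoopParam φ V Γ ∧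
      ∀ s ∈ Set.Icc (0:ℝ) V, ∀ t ∈ Set.Icc (0:ℝ) V,
        dist (φ s) (φ t) ≤ |s - t| ^ α := by
  have hp0 : 0 < p := hp ▸ one_div_pos.2 hα.1
  have hpα : p⁻¹ = α := by rw [hp, one_div, inv_inv]
  have hB := bddAbove_pVariationSums_of_pContentSums hp0.ne' hBdd
  have hB' {t : ℝ} (ht : t ≤ 1) : BddAbove (pVariationSums p ψ (Icc 0 t)) :=
    hB.mono (pVariationSums_mono (Icc_subset_Icc le_rfl ht))
  set F : ℝ → ℝ := fun t => pVariationOn p ψ (Icc 0 t)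
  have hF0 : F 0 = 0 := pVariationOn_Icc_self (hB' zero_le_one)
  have hF1 : F 1 = V := by rw [hV, sSup_pContentSums hp0.ne']
  have hFbij : BijOn F (Icc 0 1) (Icc (F 0) (F 1)) :=
    (strictMonoOn_pVariationOn_Icc hB hψ.2.2.2).bijOn_Icc
      (continuousOn_pVariationOn_Icc hp0 hψ.1 hB) zero_le_one
  rw [hF0, hF1] at hFbij
  have hHolder : ∀ u ∈ Icc 0 V, ∀ v ∈ Icc 0 V,
      dist ((ψ ∘ Function.invFunOn F (Icc 0 1)) u) ((ψ ∘ Function.invFunOn F (Icc 0 1)) v) ≤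
        |u - v| ^ α := fun u hu v hv => hpα ▸ dist_comp_invFunOn_le hp0 hFbij.surjOn
    (fun x hx y hy hxy => le_sub_iff_add_le'.2
      (pVariationOn_Icc_add_dist_rpow_le (hB' hy.2) hx.1 hxy)) hu hv
  exact ⟨_, hψ.comp_invFunOn hFbij hF0 hF1 (continuousOn_of_dist_le_abs_sub_rpow hα.1 hHolder),
    hHolder⟩

/-- A Jordan curve with finite `p`-content `V` (where `p = 1/α`) admits a
loop parametrization `φ : [0, V] → Γ` with `|φ(s) - φ(t)| ≤ |s - t|^α`. -/
theorem param_of_finite_content (α p : ℝ) (hα : α ∈ Set.Ioo (0:ℝ) 1) (hp : p = 1 / α)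
    (Γ : Set (EuclideanSpace ℝ (Fin 2)))
    (hJordan : ∃ g : EuclideanSpace ℝ (Fin 2) → EuclideanSpace ℝ (Fin 2),
      ContinuousOn g (Metric.sphere 0 1) ∧ Set.InjOn g (Metric.sphere 0 1) ∧
      g '' Metric.sphere 0 1 = Γ)
    (ψ : ℝ → EuclideanSpace ℝ (Fin 2)) (hψ : IsLoopParam ψ 1 Γ)
    (hBdd : BddAbove (pContentSums p ψ))
    (V : ℝ) (hV : V = sSup (pContentSums p ψ)) :
    ∃ φ : ℝ → EuclideanSpace ℝ (Fin 2), IsLoopParam φ V Γ ∧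
      ∀ s ∈ Set.Icc (0:ℝ) V, ∀ t ∈ Set.Icc (0:ℝ) V,
        dist (φ s) (φ t) ≤ |s - t| ^ α :=
  param_of_finite_content_general α p hα hp Γ ψ hψ hBdd V hV
end

section
/- There exists a Lipschitz homeomorphism φ : ∂Ω₁ → ∂Ω₂ that admits no Lipschitz homeomorphic extension to the closures; that is, there is no homeomorphism h : Ω̄₁ → Ω̄₂ that is Lipschitz and satisfies h = φ on ∂Ω₁. -/
/-!
The fold `(x, y) ↦ (1 - |1 - x|, y)` is the identity on `x ≤ 1` and the reflection in the line
`x = 1` on `x ≥ 1`. It is 1-Lipschitz and maps `∂Ω₁` bijectively onto `∂Ω₂`, the outward cusp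
`|y| = (2 - x)²` onto the inward cusp `|y| = x²`.

An `L`-Lipschitz extension `h : Ω̄₁ → Ω̄₂` cannot exist: the vertical segment from `(2 - t, t²)`
to `(2 - t, -t²)` lies in `Ω̄₁` and has length `2t²`, while its image is a connected set in `Ω̄₂`
joining `(t, t²)` to `(t, -t²)`. That set meets the `x`-axis, and `Ω̄₂` meets the `x`-axis only
where `x ≤ 0`, at distance at least `t` from `(t, t²)`. Hence `t ≤ 2Lt²` for every small `t > 0`.
-/

open Set Metric

noncomputable def mk2 (x y : ℝ) : EuclideanSpace ℝ (Fin 2) :=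
  (WithLp.equiv 2 (Fin 2 → ℝ)).symm ![x, y]

def SquareSet : Set (EuclideanSpace ℝ (Fin 2)) :=
  {z | z 0 ∈ Set.Ioo (-1:ℝ) 1 ∧ z 1 ∈ Set.Ioo (-1:ℝ) 1}

def Omega1 : Set (EuclideanSpace ℝ (Fin 2)) :=
  SquareSet ∪ {z | 1 ≤ z 0 ∧ z 0 < 2 ∧ |z 1| < (2 - z 0) ^ 2}

def Omega2 : Set (EuclideanSpace ℝ (Fin 2)) :=
  SquareSet \ {z | 0 ≤ z 0 ∧ z 0 ≤ 1 ∧ |z 1| ≤ (z 0) ^ 2}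

local notation "ℝ²" => EuclideanSpace ℝ (Fin 2)

@[simp] lemma mk2_apply_zero (x y : ℝ) : mk2 x y 0 = x := by simp [mk2]
@[simp] lemma mk2_apply_one (x y : ℝ) : mk2 x y 1 = y := by simp [mk2]

lemma ext_fin_two {z w : ℝ²} (h0 : z 0 = w 0) (h1 : z 1 = w 1) : z = w := by
  ext i; fin_cases i <;> assumption

lemma dist_eq_sqrt_fin_two (z w : ℝ²) :
    dist z w = √((z 0 - w 0) ^ 2 + (z 1 - w 1) ^ 2) := by
  simp [EuclideanSpace.dist_eq, Fin.sum_univ_two, Real.dist_eq, sq_abs]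

lemma dist_mk2_same_fst (x y y' : ℝ) : dist (mk2 x y) (mk2 x y') = |y - y'| := by
  simp [dist_eq_sqrt_fin_two, Real.sqrt_sq_eq_abs]

lemma mem_SquareSet {z : ℝ²} : z ∈ SquareSet ↔ -1 < z 0 ∧ z 0 < 1 ∧ |z 1| < 1 := by
  simp [SquareSet, abs_lt, and_assoc]

def closedOmega1 : Set ℝ² :=
  {z | (-1 ≤ z 0 ∧ z 0 ≤ 1 ∧ |z 1| ≤ 1) ∨ (1 ≤ z 0 ∧ z 0 ≤ 2 ∧ |z 1| ≤ (2 - z 0) ^ 2)}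

def closedOmega2 : Set ℝ² :=
  {z | -1 ≤ z 0 ∧ z 0 ≤ 1 ∧ |z 1| ≤ 1 ∧ (z 0 ≤ 0 ∨ z 0 ^ 2 ≤ |z 1|)}

def boundaryOmega1 : Set ℝ² :=
  {z | (z 0 = -1 ∧ |z 1| ≤ 1) ∨ (|z 1| = 1 ∧ -1 ≤ z 0 ∧ z 0 ≤ 1) ∨
    (1 ≤ z 0 ∧ z 0 ≤ 2 ∧ |z 1| = (2 - z 0) ^ 2)}

def boundaryOmega2 : Set ℝ² :=
  {z | (z 0 = -1 ∧ |z 1| ≤ 1) ∨ (|z 1| = 1 ∧ -1 ≤ z 0 ∧ z 0 ≤ 1) ∨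
    (0 ≤ z 0 ∧ z 0 ≤ 1 ∧ |z 1| = z 0 ^ 2)}

lemma Omega1_eq_setOf : Omega1 =
    {z : ℝ² | (-1 < z 0 ∧ z 0 < 2 ∧ |z 1| < 1) ∧ (z 0 < 1 ∨ |z 1| < (2 - z 0) ^ 2)} := by
  ext z
  simp only [Omega1, mem_union, mem_SquareSet, mem_ofPred]
  constructor
  · rintro (⟨h0, h1, h2⟩ | ⟨h0, h1, h2⟩)
    · exact ⟨⟨h0, by linarith, h2⟩, .inl h1⟩
    · exact ⟨⟨by linarith, h1, by nlinarith⟩, .inr h2⟩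
  · rintro ⟨⟨h0, h1, h2⟩, h3 | h3⟩
    · exact .inl ⟨h0, h3, h2⟩
    · by_cases h : z 0 < 1
      · exact .inl ⟨h0, h, h2⟩
      · exact .inr ⟨not_lt.1 h, h1, h3⟩

lemma isOpen_Omega1 : IsOpen Omega1 := by
  rw [Omega1_eq_setOf]
  simp only [ofPred_and, ofPred_or]
  apply_rules [IsOpen.inter, IsOpen.union] <;> apply isOpen_lt <;> fun_prop

lemma isOpen_Omega2 : IsOpen Omega2 := by
  refine .sdiff (.and ?_ ?_) ?_
  · exact isOpen_Ioo.preimage (by fun_prop)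
  · exact isOpen_Ioo.preimage (by fun_prop)
  · simp only [ofPred_and]
    apply_rules [IsClosed.inter] <;> apply isClosed_le <;> fun_prop

lemma isClosed_closedOmega1 : IsClosed closedOmega1 := by
  simp only [closedOmega1, ofPred_and, ofPred_or]
  apply_rules [IsClosed.inter, IsClosed.union] <;> apply isClosed_le <;> fun_prop

lemma isClosed_closedOmega2 : IsClosed closedOmega2 := by
  simp only [closedOmega2, ofPred_and, ofPred_or]
  apply_rules [IsClosed.inter, IsClosed.union] <;> apply isClosed_le <;> fun_prop

lemma mem_closure_of_openSegment_subset {E : Type*} [AddCommGroup E] [TopologicalSpace E]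
    [ContinuousAdd E] [Module ℝ E] [ContinuousSMul ℝ E] {S : Set E} {c z : E}
    (h : openSegment ℝ c z ⊆ S) : z ∈ closure S :=
  closure_mono h (segment_subset_closure_openSegment (right_mem_segment ℝ c z))

lemma closure_Omega1 : closure Omega1 = closedOmega1 := by
  refine (closure_minimal ?_ isClosed_closedOmega1).antisymm fun z hz => ?_
  · rintro z (hz | ⟨h0, h1, h2⟩)
    · obtain ⟨h0, h1, h2⟩ := mem_SquareSet.1 hz
      exact .inl ⟨h0.le, h1.le, h2.le⟩
    · exact .inr ⟨h0, h1.le, h2.le⟩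
  refine mem_closure_of_openSegment_subset (c := 0) ?_
  rw [openSegment_eq_image']
  rintro _ ⟨s, ⟨hs0, hs1⟩, rfl⟩
  rw [Omega1_eq_setOf]
  simp only [mem_ofPred, zero_add, sub_zero, PiLp.smul_apply, smul_eq_mul, abs_mul,
    abs_of_pos hs0]
  have := abs_nonneg (z 1)
  rcases hz with ⟨h0, h1, h2⟩ | ⟨h0, h1, h2⟩
  · refine ⟨⟨by nlinarith, by nlinarith, by nlinarith⟩, .inl (by nlinarith)⟩
  · have : (2 - z 0) ^ 2 ≤ 1 := by nlinarith
    refine ⟨⟨by nlinarith, by nlinarith, by nlinarith⟩, ?_⟩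
    by_cases h : s * z 0 < 1
    · exact .inl h
    have hsx : 2 - z 0 < 2 - s * z 0 := by nlinarith
    refine .inr ?_
    calc s * |z 1| ≤ |z 1| := by nlinarith
      _ ≤ (2 - z 0) ^ 2 := h2
      _ < (2 - s * z 0) ^ 2 := by gcongr

lemma closure_Omega2 : closure Omega2 = closedOmega2 := by
  refine (closure_minimal ?_ isClosed_closedOmega2).antisymm fun z hz => ?_
  · rintro z ⟨hz, hcusp⟩
    obtain ⟨h0, h1, h2⟩ := mem_SquareSet.1 hz
    refine ⟨h0.le, h1.le, h2.le, ?_⟩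
    by_contra! h
    exact hcusp ⟨h.1.le, h1.le, h.2.le⟩
  -- The open segments from `(-1/2, 0)` to the points of `closedOmega2` stay in `Omega2`;
  -- from the cusp tip `0` they would not.
  refine mem_closure_of_openSegment_subset (c := mk2 (-1 / 2) 0) ?_
  rw [openSegment_eq_image']
  rintro _ ⟨s, ⟨hs0, hs1⟩, rfl⟩
  obtain ⟨h0, h1, h2, h3⟩ := hz
  simp only [Omega2, mem_sdiff, mem_SquareSet, mem_ofPred, PiLp.add_apply, PiLp.smul_apply,
    PiLp.sub_apply, smul_eq_mul, mk2_apply_zero, mk2_apply_one, zero_add, sub_zero, abs_mul,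
    abs_of_pos hs0, not_and]
  have := abs_nonneg (z 1)
  refine ⟨⟨by nlinarith, by nlinarith, by nlinarith⟩, fun hu _ hy => ?_⟩
  set u := -1 / 2 + s * (z 0 - -1 / 2) with hu_def
  have hx : 0 < z 0 := by nlinarith
  have hux : u < z 0 := by nlinarith
  have h3 : s * z 0 ^ 2 ≤ u ^ 2 :=
    (mul_le_mul_of_nonneg_left (h3.resolve_left hx.not_ge) hs0.le).trans hy
  have hsu : s * (z 0 + 1 / 2) = u + 1 / 2 := by rw [hu_def]; ring
  -- After multiplying `h3` by `z 0 + 1/2`, it contradicts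
  -- `(u + 1/2) * z 0 ^ 2 - (z 0 + 1/2) * u ^ 2 = (z 0 - u) * (z 0 * u + (z 0 + u) / 2) > 0`.
  have : 0 < (z 0 - u) * (z 0 * u + (z 0 + u) / 2) :=
    mul_pos (sub_pos.2 hux) (by positivity)
  nlinarith [mul_le_mul_of_nonneg_right h3 (by linarith : (0 : ℝ) ≤ z 0 + 1 / 2)]

lemma frontier_Omega1 : frontier Omega1 = boundaryOmega1 := by
  rw [frontier, closure_Omega1, isOpen_Omega1.interior_eq]
  ext z
  simp only [closedOmega1, boundaryOmega1, Omega1, mem_sdiff, mem_union, mem_SquareSet,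
    mem_ofPred]
  have := abs_nonneg (z 1)
  constructor
  · rintro ⟨⟨h0, h1, h2⟩ | ⟨h0, h1, h2⟩, hΩ⟩
    · rcases h0.eq_or_lt with h0 | h0
      · exact .inl ⟨h0.symm, h2⟩
      rcases h2.eq_or_lt with h2 | h2
      · exact .inr (.inl ⟨h2, h0.le, h1⟩)
      rcases h1.lt_or_eq with h1 | h1
      · exact absurd (.inl ⟨h0, h1, h2⟩) hΩ
      refine absurd (.inr ⟨h1.ge, by linarith, ?_⟩) hΩ
      rw [h1]; norm_num [h2]
    · rcases h2.eq_or_lt with h2 | h2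
      · exact .inr (.inr ⟨h0, h1, h2⟩)
      rcases h1.lt_or_eq with h1 | h1
      · exact absurd (.inr ⟨h0, h1, h2⟩) hΩ
      rw [h1] at h2; norm_num at h2; linarith
  · rintro (⟨h0, h2⟩ | ⟨h2, h0, h1⟩ | ⟨h0, h1, h2⟩)
    · refine ⟨.inl ⟨h0.ge, by linarith, h2⟩, ?_⟩
      rintro (⟨h, -⟩ | ⟨h, -⟩) <;> linarith
    · refine ⟨.inl ⟨h0, h1, h2.le⟩, ?_⟩
      rintro (⟨-, -, h⟩ | ⟨h, -, h'⟩) <;> nlinarith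
    · refine ⟨.inr ⟨h0, h1, h2.le⟩, ?_⟩
      rintro (⟨-, h, -⟩ | ⟨-, -, h⟩) <;> linarith

lemma frontier_Omega2 : frontier Omega2 = boundaryOmega2 := by
  rw [frontier, closure_Omega2, isOpen_Omega2.interior_eq]
  ext z
  simp only [closedOmega2, boundaryOmega2, Omega2, mem_sdiff, mem_SquareSet, mem_ofPred]
  have := abs_nonneg (z 1)
  constructor
  · rintro ⟨⟨h0, h1, h2, h3⟩, hΩ⟩
    rcases h0.eq_or_lt with h0 | h0
    · exact .inl ⟨h0.symm, h2⟩
    rcases h2.eq_or_lt with h2 | h2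
    · exact .inr (.inl ⟨h2, h0.le, h1⟩)
    rcases h1.lt_or_eq with h1 | h1
    · obtain ⟨hx, -, hy⟩ : 0 ≤ z 0 ∧ z 0 ≤ 1 ∧ |z 1| ≤ z 0 ^ 2 := by
        by_contra h; exact hΩ ⟨⟨h0, h1, h2⟩, h⟩
      refine .inr (.inr ⟨hx, h1.le, hy.antisymm ?_⟩)
      rcases h3 with h3 | h3
      · rw [le_antisymm h3 hx]; simp
      · exact h3
    · rw [h1] at h3; norm_num at h3; linarith
  · rintro (⟨h0, h2⟩ | ⟨h2, h0, h1⟩ | ⟨h0, h1, h2⟩)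
    · exact ⟨⟨h0.ge, by linarith, h2, .inl (by linarith)⟩, fun ⟨⟨h, _⟩, _⟩ => by linarith⟩
    · exact ⟨⟨h0, h1, h2.le, .inr (by nlinarith)⟩, fun ⟨⟨_, _, h⟩, _⟩ => by linarith⟩
    · exact ⟨⟨by linarith, h1, by nlinarith, .inr h2.ge⟩, fun ⟨_, h⟩ => h ⟨h0, h1, h2.le⟩⟩

noncomputable def fold (z : ℝ²) : ℝ² := mk2 (1 - |1 - z 0|) (z 1)

@[simp] lemma fold_apply_zero (z : ℝ²) : fold z 0 = 1 - |1 - z 0| := mk2_apply_zero ..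
@[simp] lemma fold_apply_one (z : ℝ²) : fold z 1 = z 1 := mk2_apply_one ..

lemma lipschitzWith_one_fold : LipschitzWith 1 fold := by
  refine LipschitzWith.of_dist_le_mul fun z w => ?_
  rw [NNReal.coe_one, one_mul, dist_eq_sqrt_fin_two, dist_eq_sqrt_fin_two]
  have : |(1 - |1 - z 0|) - (1 - |1 - w 0|)| ≤ |z 0 - w 0| := by
    simpa [abs_sub_comm (z 0)] using abs_abs_sub_abs_le_abs_sub (1 - w 0) (1 - z 0)
  have := pow_le_pow_left₀ (abs_nonneg _) this 2
  rw [sq_abs, sq_abs] at this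
  simp only [fold_apply_zero, fold_apply_one]
  exact Real.sqrt_le_sqrt (by linarith)

lemma fold_of_le_one {z : ℝ²} (h : z 0 ≤ 1) : fold z = z :=
  ext_fin_two (by simp [abs_of_nonneg (sub_nonneg.2 h)]) (fold_apply_one z)

lemma injOn_fold : InjOn fold boundaryOmega1 := by
  intro z hz w hw h
  have h1 : z 1 = w 1 := by simpa using congr_arg (· 1) h
  have h0 : |1 - z 0| = |1 - w 0| := by simpa using congr_arg (· 0) h
  refine ext_fin_two ?_ h1
  rcases abs_eq_abs.1 h0 with h0 | h0
  · linarith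
  simp only [boundaryOmega1, mem_ofPred, ← h1] at hz hw
  rcases hz with ⟨_, _⟩ | ⟨_, _, _⟩ | ⟨_, _, _⟩ <;>
    rcases hw with ⟨_, _⟩ | ⟨_, _, _⟩ | ⟨_, _, _⟩ <;> nlinarith

lemma mapsTo_fold : MapsTo fold boundaryOmega1 boundaryOmega2 := by
  rintro z (⟨h0, h1⟩ | ⟨h1, h0, h0'⟩ | ⟨h0, h0', h1⟩)
  · rw [fold_of_le_one (by linarith)]; exact .inl ⟨h0, h1⟩
  · rw [fold_of_le_one h0']; exact .inr (.inl ⟨h1, h0, h0'⟩)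
  · have : |1 - z 0| = z 0 - 1 := by rw [abs_sub_comm, abs_of_nonneg (by linarith)]
    refine .inr (.inr ⟨?_, ?_, ?_⟩) <;> simp only [fold_apply_zero, fold_apply_one, this]
    · linarith
    · linarith
    · rw [h1]; ring

lemma surjOn_fold : SurjOn fold boundaryOmega1 boundaryOmega2 := by
  rintro w (⟨h0, h1⟩ | ⟨h1, h0, h0'⟩ | ⟨h0, h0', h1⟩)
  · exact ⟨w, .inl ⟨h0, h1⟩, fold_of_le_one (by linarith)⟩
  · exact ⟨w, .inr (.inl ⟨h1, h0, h0'⟩), fold_of_le_one h0'⟩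
  · have : |1 - (2 - w 0)| = 1 - w 0 := by rw [abs_sub_comm, abs_of_nonneg (by linarith)]; ring
    refine ⟨mk2 (2 - w 0) (w 1), .inr (.inr ⟨?_, ?_, ?_⟩), ext_fin_two ?_ ?_⟩ <;>
      simp only [mk2_apply_zero, mk2_apply_one, fold_apply_zero, fold_apply_one, this, h1]
    · linarith
    · linarith
    · ring
    · ring

lemma image_fold_boundaryOmega1 : fold '' boundaryOmega1 = boundaryOmega2 :=
  mapsTo_fold.image_subset.antisymm surjOn_fold

lemma mk2_mem_frontier_Omega1 {t y : ℝ} (ht0 : 0 ≤ t) (ht1 : t ≤ 1) (hy : |y| = t ^ 2) :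
    mk2 (2 - t) y ∈ frontier Omega1 := by
  rw [frontier_Omega1]
  exact .inr (.inr ⟨by simp; linarith, by simp [ht0], by simp [hy]⟩)

lemma segment_subset_closure_Omega1 {t : ℝ} (ht0 : 0 ≤ t) (ht1 : t ≤ 1) :
    segment ℝ (mk2 (2 - t) (t ^ 2)) (mk2 (2 - t) (-t ^ 2)) ⊆ closure Omega1 := by
  rintro _ ⟨a, b, ha, hb, hab, rfl⟩
  rw [closure_Omega1]
  simp only [closedOmega1, mem_ofPred, PiLp.add_apply, PiLp.smul_apply, smul_eq_mul,
    mk2_apply_zero, mk2_apply_one, ← add_mul, hab, one_mul, sub_sub_cancel, abs_le]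
  exact .inr ⟨by linarith, by linarith, by nlinarith, by nlinarith⟩

lemma apply_zero_nonpos_of_mem_closure_Omega2 {z : ℝ²} (hz : z ∈ closure Omega2)
    (h1 : z 1 = 0) : z 0 ≤ 0 := by
  rw [closure_Omega2] at hz
  obtain ⟨-, -, -, h | h⟩ := hz
  · exact h
  · rw [h1, abs_zero] at h
    exact (pow_eq_zero_iff two_ne_zero).1 (h.antisymm (sq_nonneg _)) |>.le

theorem not_lipschitzOnWith_of_eqOn_fold (K : NNReal) {h : ℝ² → ℝ²}
    (hmaps : MapsTo h (closure Omega1) (closure Omega2)) (hfold : EqOn h fold (frontier Omega1)) :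
    ¬ LipschitzOnWith K h (closure Omega1) := by
  intro hK
  set t : ℝ := (2 * K + 1)⁻¹
  have ht0 : 0 < t := by positivity
  have ht1 : t ≤ 1 := inv_le_one_of_one_le₀ (by linarith [K.2])
  set p := mk2 (2 - t) (t ^ 2)
  set q := mk2 (2 - t) (-t ^ 2)
  have hp : p ∈ frontier Omega1 :=
    mk2_mem_frontier_Omega1 ht0.le ht1 (abs_of_nonneg (sq_nonneg t))
  have hq : q ∈ frontier Omega1 := mk2_mem_frontier_Omega1 ht0.le ht1 (by simp)
  have hS := segment_subset_closure_Omega1 ht0.le ht1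
  obtain ⟨x, hx, hx1⟩ : ∃ x ∈ segment ℝ p q, h x 1 = 0 := by
    refine (convex_segment p q).isPreconnected.intermediate_value (right_mem_segment ℝ p q)
      (left_mem_segment ℝ p q) ((by fun_prop : Continuous fun w : ℝ² => w 1).comp_continuousOn
        (hK.continuousOn.mono hS)) ⟨?_, ?_⟩
    · simp [hfold hq, q]; positivity
    · simp [hfold hp, p]; positivity
  have hx0 : h x 0 ≤ 0 := apply_zero_nonpos_of_mem_closure_Omega2 (hmaps (hS hx)) hx1
  have hp0 : h p 0 = t := by
    rw [hfold hp, fold_apply_zero, mk2_apply_zero, abs_of_nonpos (by linarith)]; ring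
  have hpq : dist p q = 2 * t ^ 2 := by
    rw [dist_mk2_same_fst, sub_neg_eq_add, ← two_mul, abs_of_nonneg (by positivity)]
  have key : t ≤ K * (2 * t ^ 2) := calc
    t ≤ dist (h p 0) (h x 0) := by rw [Real.dist_eq, hp0]; exact le_abs.2 (.inl (by linarith))
    _ ≤ dist (h p) (h x) := PiLp.dist_apply_le _ _ _
    _ ≤ K * dist p x := hK.dist_le_mul _ (hS (left_mem_segment ℝ p q)) _ (hS hx)
    _ ≤ K * dist p q := by
      gcongr; linarith [dist_add_dist_of_mem_segment hx, dist_nonneg (x := x) (y := q)]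
    _ = K * (2 * t ^ 2) := by rw [hpq]
  have : (2 * K + 1) * t = 1 := mul_inv_cancel₀ (by positivity)
  nlinarith

/-- There is a Lipschitz homeomorphism `φ : ∂Ω₁ → ∂Ω₂` admitting no
Lipschitz homeomorphic extension `h : Ω̄₁ → Ω̄₂`. -/
theorem no_lipschitz_extension_example :
    ∃ φ : EuclideanSpace ℝ (Fin 2) → EuclideanSpace ℝ (Fin 2),
      ContinuousOn φ (frontier Omega1) ∧ Set.InjOn φ (frontier Omega1) ∧
      φ '' frontier Omega1 = frontier Omega2 ∧
      (∃ L : ℝ, 0 ≤ L ∧ ∀ x ∈ frontier Omega1, ∀ y ∈ frontier Omega1,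
        dist (φ x) (φ y) ≤ L * dist x y) ∧
      ¬ ∃ h : EuclideanSpace ℝ (Fin 2) → EuclideanSpace ℝ (Fin 2),
        ContinuousOn h (closure Omega1) ∧ Set.InjOn h (closure Omega1) ∧
        h '' closure Omega1 = closure Omega2 ∧
        (∃ L : ℝ, 0 ≤ L ∧ ∀ x ∈ closure Omega1, ∀ y ∈ closure Omega1,
          dist (h x) (h y) ≤ L * dist x y) ∧
        (∀ x ∈ frontier Omega1, h x = φ x) := by
  refine ⟨fold, lipschitzWith_one_fold.continuous.continuousOn, ?_, ?_,
    ⟨1, zero_le_one, fun x _ y _ => by simpa using lipschitzWith_one_fold.dist_le_mul x y⟩, ?_⟩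
  · rw [frontier_Omega1]; exact injOn_fold
  · rw [frontier_Omega1, frontier_Omega2]; exact image_fold_boundaryOmega1
  · rintro ⟨h, -, -, himg, ⟨L, hL, hLip⟩, hfold⟩
    exact not_lipschitzOnWith_of_eqOn_fold ⟨L, hL⟩ (himg ▸ mapsTo_image h _) hfold
      (.of_dist_le_mul hLip)
end

section
/- Let Y ⊂ ℝ² be a Jordan domain. Call a point ω ∈ ∂Y a good point if there exists z ∈ ℝ², z ≠ ω, such that the half-open line segment {(1−s)ω + s z : s ∈ (0,1]} is contained in Y. Then for every ω ∈ ∂Y and every ε > 0 there exists a good point ω' ∈ ∂Y with |ω − ω'| < ε. -/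
open Set Metric

/-- `ω` is a good point of the Jordan domain `Y` if some nondegenerate half-open
segment emanating from `ω` lies entirely inside `Y`. -/
def GoodPoint (Y : Set (EuclideanSpace ℝ (Fin 2))) (ω : EuclideanSpace ℝ (Fin 2)) : Prop :=
  ∃ z : EuclideanSpace ℝ (Fin 2), z ≠ ω ∧
    ∀ s ∈ Set.Ioc (0:ℝ) 1, ((1 - s) • ω + s • z) ∈ Y

/-! Walk along the segment from a point `y ∈ Y` close to `ω` towards `ω` and stop at the first
point outside the open set `Y`. That point lies on `∂Y`, it is at most as far from `ω` as `y` is,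
and the segment back to `y` lies in `Y`, so it is good. -/

theorem exists_first_exit_of_isOpen {X : Type*} [TopologicalSpace X] {U : Set X} (hU : IsOpen U)
    {γ : ℝ → X} (hγ : ContinuousOn γ (Icc 0 1)) (h0 : γ 0 ∈ U) (h1 : γ 1 ∉ U) :
    ∃ t ∈ Ioc (0 : ℝ) 1, γ t ∈ frontier U ∧ ∀ u ∈ Ico 0 t, γ u ∈ U := by
  set T := Icc 0 1 ∩ γ ⁻¹' Uᶜ
  have hT : IsClosed T := hγ.preimage_isClosed_of_isClosed isClosed_Icc hU.isClosed_compl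
  have hbdd : BddBelow T := ⟨0, fun _ h ↦ h.1.1⟩
  have htT : sInf T ∈ T := hT.csInf_mem ⟨1, ⟨zero_le_one, le_rfl⟩, h1⟩ hbdd
  have ht_pos : 0 < sInf T := htT.1.1.lt_of_ne fun h ↦ htT.2 (h ▸ h0)
  have hbefore : ∀ u ∈ Ico 0 (sInf T), γ u ∈ U := fun u hu ↦ by
    by_contra h
    exact (csInf_le hbdd ⟨⟨hu.1, hu.2.le.trans htT.1.2⟩, h⟩).not_gt hu.2
  refine ⟨sInf T, ⟨ht_pos, htT.1.2⟩, ?_, hbefore⟩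
  rw [hU.frontier_eq]
  refine ⟨closure_mono (image_subset_iff.2 hbefore) ?_, htT.2⟩
  refine ((hγ _ htT.1).mono fun u hu ↦ ⟨hu.1, hu.2.le.trans htT.1.2⟩).mem_closure_image ?_
  rw [closure_Ico ht_pos.ne]
  exact right_mem_Icc.2 ht_pos.le

theorem goodPoint_lineMap {Y : Set (EuclideanSpace ℝ (Fin 2))} {y ω : EuclideanSpace ℝ (Fin 2)}
    {t : ℝ} (ht : 0 < t) (hne : AffineMap.lineMap y ω t ≠ y)
    (hseg : ∀ u ∈ Ico 0 t, AffineMap.lineMap y ω u ∈ Y) :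
    GoodPoint Y (AffineMap.lineMap y ω t) := by
  refine ⟨y, hne.symm, fun s hs ↦ ?_⟩
  have hback : (1 - s) • AffineMap.lineMap y ω t + s • y = AffineMap.lineMap y ω ((1 - s) * t) := by
    simp only [AffineMap.lineMap_apply_module]
    module
  rw [hback]
  exact hseg _ ⟨mul_nonneg (sub_nonneg.2 hs.2) ht.le, mul_lt_of_lt_one_left ht (by linarith [hs.1])⟩

theorem isOpen_connectedComponentIn_compl_of_isCompact {X : Type*} [TopologicalSpace X] [T2Space X]
    [LocallyConnectedSpace X] {K : Set X} (hK : IsCompact K) (x : X) :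
    IsOpen (connectedComponentIn Kᶜ x) :=
  hK.isClosed.isOpen_compl.connectedComponentIn

theorem good_points_dense_general (Γ Y : Set (EuclideanSpace ℝ (Fin 2)))
    (hJordan : ∃ g : EuclideanSpace ℝ (Fin 2) → EuclideanSpace ℝ (Fin 2),
      ContinuousOn g (Metric.sphere 0 1) ∧ Set.InjOn g (Metric.sphere 0 1) ∧
      g '' Metric.sphere 0 1 = Γ)
    (hY : ∃ x ∈ Γᶜ, Y = connectedComponentIn Γᶜ x) :
    ∀ ω ∈ frontier Y, ∀ ε > (0:ℝ), ∃ ω' ∈ frontier Y,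
      GoodPoint Y ω' ∧ dist ω ω' < ε := by
  obtain ⟨g, hg, -, rfl⟩ := hJordan
  obtain ⟨x, -, rfl⟩ := hY
  have hopen := isOpen_connectedComponentIn_compl_of_isCompact
    ((isCompact_sphere 0 1).image_of_continuousOn hg) x
  intro ω hω ε hε
  rw [hopen.frontier_eq] at hω
  obtain ⟨y, hy, hyω⟩ := Metric.mem_closure_iff.1 hω.1 ε hε
  obtain ⟨t, ht, hexit, hseg⟩ := exists_first_exit_of_isOpen hopen
    (AffineMap.lineMap_continuous (p := y) (q := ω)).continuousOn
    (by simpa using hy) (by simpa using hω.2)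
  refine ⟨_, hexit, goodPoint_lineMap ht.1 ?_ hseg, ?_⟩
  · intro hy'
    rw [hopen.frontier_eq, hy'] at hexit
    exact hexit.2 hy
  · calc dist ω (AffineMap.lineMap y ω t) = ‖1 - t‖ * dist y ω := by
          rw [dist_comm, dist_lineMap_right]
      _ ≤ 1 * dist ω y := by
          rw [dist_comm y]
          gcongr
          rw [Real.norm_eq_abs, abs_le]
          constructor <;> linarith [ht.1, ht.2]
      _ < ε := by rwa [one_mul]

/-- In a Jordan domain `Y` (the bounded connected component of the
complement of a Jordan curve `Γ`), good points are dense in the boundary `∂Y`. -/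
theorem good_points_dense (Γ Y : Set (EuclideanSpace ℝ (Fin 2)))
    (hJordan : ∃ g : EuclideanSpace ℝ (Fin 2) → EuclideanSpace ℝ (Fin 2),
      ContinuousOn g (Metric.sphere 0 1) ∧ Set.InjOn g (Metric.sphere 0 1) ∧
      g '' Metric.sphere 0 1 = Γ)
    (hY : ∃ x ∈ Γᶜ, Y = connectedComponentIn Γᶜ x)
    (hbdd : Bornology.IsBounded Y) :
    ∀ ω ∈ frontier Y, ∀ ε > (0:ℝ), ∃ ω' ∈ frontier Y,
      GoodPoint Y ω' ∧ dist ω ω' < ε :=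
  good_points_dense_general Γ Y hJordan hY
end
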